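/- arXiv:1707.05112 — 8 statements merged into one kernel-verified Lean document; each statement's English description precedes it below -/
import Mathlib

section
/- Let x0 ≥ 1 and f : [x0, ∞) → ℝ be twice continuously differentiable with f, f', f'' > 0, and suppose that for all x0 ≤ x ≤ y ≤ 2x we have f''(x)/2 ≤ f''(y) ≤ f''(x). Then for all x ≥ 2x0 we have x·f''(x) ≤ 2·f'(x). -/
/-!
By the mean value theorem `f' x - f' (x/2) = (x/2) f'' c` for some `c ∈ (x/2, x)`, and the
doubling condition gives `f'' x ≤ f'' c`; since `f' (x/2) > 0`, this yields `x f'' x ≤ 2 f' x`.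
-/

open Set

lemma mul_deriv_le_two_mul_sub_half {g g' : ℝ → ℝ} {x : ℝ} (hx : 0 ≤ x)
    (hd : ∀ y ∈ Icc (x / 2) x, HasDerivAt g (g' y) y)
    (hmin : ∀ y ∈ Ioo (x / 2) x, g' x ≤ g' y) :
    x * g' x ≤ 2 * (g x - g (x / 2)) := by
  have hgain : g' x * (x - x / 2) ≤ g x - g (x / 2) := by
    refine (convex_Icc (x / 2) x).mul_sub_le_image_sub_of_le_deriv
      (fun y hy => (hd y hy).continuousAt.continuousWithinAt) ?_ ?_
      (x / 2) ⟨le_rfl, by linarith⟩ x ⟨by linarith, le_rfl⟩ (by linarith)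
    · rw [interior_Icc]
      exact fun y hy => (hd y (Ioo_subset_Icc_self hy)).differentiableAt.differentiableWithinAt
    · rw [interior_Icc]
      intro y hy
      rw [(hd y (Ioo_subset_Icc_self hy)).deriv]
      exact hmin y hy
  linarith

theorem stmt_1_general (x0 : ℝ) (f f' f'' : ℝ → ℝ)
    (hx0 : 1 ≤ x0)
    (hd2 : ∀ x ∈ Set.Ici x0, HasDerivAt f' (f'' x) x)
    (hpos : ∀ x ∈ Set.Ici x0, 0 < f x ∧ 0 < f' x ∧ 0 < f'' x)
    (hdbl : ∀ x y : ℝ, x0 ≤ x → x ≤ y → y ≤ 2 * x → f'' x / 2 ≤ f'' y ∧ f'' y ≤ f'' x) :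
    ∀ x : ℝ, 2 * x0 ≤ x → x * f'' x ≤ 2 * f' x := by
  intro x hx
  have hhalf : x0 ≤ x / 2 := by linarith
  have hgain : x * f'' x ≤ 2 * (f' x - f' (x / 2)) :=
    mul_deriv_le_two_mul_sub_half (by linarith)
      (fun y hy => hd2 y (hhalf.trans hy.1))
      (fun y hy => (hdbl y x (hhalf.trans hy.1.le) hy.2.le (by linarith [hy.1])).2)
  linarith [(hpos _ hhalf).2.1]

theorem stmt_1 (x0 : ℝ) (f f' f'' : ℝ → ℝ)
    (hx0 : 1 ≤ x0)
    (hd1 : ∀ x ∈ Set.Ici x0, HasDerivAt f (f' x) x)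
    (hd2 : ∀ x ∈ Set.Ici x0, HasDerivAt f' (f'' x) x)
    (hcont : ContinuousOn f'' (Set.Ici x0))
    (hpos : ∀ x ∈ Set.Ici x0, 0 < f x ∧ 0 < f' x ∧ 0 < f'' x)
    (hdbl : ∀ x y : ℝ, x0 ≤ x → x ≤ y → y ≤ 2 * x → f'' x / 2 ≤ f'' y ∧ f'' y ≤ f'' x) :
    ∀ x : ℝ, 2 * x0 ≤ x → x * f'' x ≤ 2 * f' x :=
  stmt_1_general x0 f f' f'' hx0 hd2 hpos hdbl
end

section
/- Let x0 ≥ 1 and f : [x0, ∞) → ℝ be twice continuously differentiable with f, f', f'' > 0, and suppose that for all x0 ≤ x ≤ y ≤ 2x we have f''(x)/2 ≤ f''(y) ≤ f''(x). Then for all x ≥ x0 we have f'(x) − f'(x0) ≤ 2·x·f''(x)·log x. -/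
/-!
Iterating the lower doubling bound `f'' x / 2 ≤ f'' y` along a chain of points at most a factor
2 apart gives `f'' t ≤ 2 ^ n f'' y` whenever `t ≤ y ≤ 2 ^ n t`; choosing
`2 ^ n ≤ y / t < 2 ^ (n + 1)` yields `t f'' t ≤ 2 x f'' x` for `x0 ≤ t ≤ x`. Hence
`f'' t ≤ c / t` on `[x0, x]` with `c = 2 x f'' x`, and comparing `f'` with `c log` gives
`f' x - f' x0 ≤ c (log x - log x0) ≤ c log x`.
-/

open Real Set

section Doubling

variable {g : ℝ → ℝ} {x0 : ℝ}

lemma le_two_pow_mul_of_half_le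
    (hg : ∀ x y, x0 ≤ x → x ≤ y → y ≤ 2 * x → g x / 2 ≤ g y) :
    ∀ (n : ℕ) {t y : ℝ}, x0 ≤ t → t ≤ y → y ≤ 2 ^ n * t → g t ≤ 2 ^ n * g y
  | 0, t, y, _, hty, hyt => by
    rw [pow_zero, one_mul] at hyt ⊢
    rw [le_antisymm hty hyt]
  | n + 1, t, y, ht, hty, hyt => by
    have ht0 : 0 ≤ t := by
      have h2 : (2 : ℝ) ≤ 2 ^ (n + 1) := le_self_pow₀ one_le_two n.succ_ne_zero
      nlinarith
    set z := max t (y / 2)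
    have htz : t ≤ z := le_max_left _ _
    have hzy : z ≤ y := max_le hty (by linarith)
    have hz : z ≤ 2 ^ n * t := max_le (le_mul_of_one_le_left ht0 (one_le_pow₀ one_le_two))
      (by rw [pow_succ] at hyt; linarith)
    have hyz : y ≤ 2 * z := by linarith [le_max_right t (y / 2)]
    have hgz : g z ≤ 2 * g y := by linarith [hg z y (ht.trans htz) hzy hyz]
    calc g t ≤ 2 ^ n * g z := le_two_pow_mul_of_half_le hg n ht htz hz
      _ ≤ 2 ^ n * (2 * g y) := mul_le_mul_of_nonneg_left hgz (by positivity)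
      _ = 2 ^ (n + 1) * g y := by ring

lemma mul_le_two_mul_mul_of_half_le (hx0 : 0 < x0)
    (hg : ∀ x y, x0 ≤ x → x ≤ y → y ≤ 2 * x → g x / 2 ≤ g y) (hg0 : ∀ y, x0 ≤ y → 0 ≤ g y)
    {t y : ℝ} (ht : x0 ≤ t) (hty : t ≤ y) : t * g t ≤ 2 * y * g y := by
  have ht0 : 0 < t := hx0.trans_le ht
  obtain ⟨n, hlow, hhigh⟩ := exists_nat_pow_near ((one_le_div ht0).2 hty) one_lt_two
  rw [le_div_iff₀ ht0] at hlow
  rw [div_lt_iff₀ ht0] at hhigh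
  have hgy := hg0 y (ht.trans hty)
  have hgt := le_two_pow_mul_of_half_le hg (n + 1) ht hty hhigh.le
  calc t * g t ≤ t * (2 ^ (n + 1) * g y) := mul_le_mul_of_nonneg_left hgt ht0.le
    _ = 2 * (2 ^ n * t) * g y := by ring
    _ ≤ 2 * y * g y := by gcongr

end Doubling

lemma sub_le_mul_log_sub_log_of_mul_deriv_le {g g' : ℝ → ℝ} {a b c : ℝ} (ha : 0 < a)
    (hab : a ≤ b) (hg : ∀ t ∈ Icc a b, HasDerivAt g (g' t) t)
    (hbound : ∀ t ∈ Icc a b, t * g' t ≤ c) : g b - g a ≤ c * (log b - log a) := by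
  have hderiv : ∀ t ∈ Icc a b, HasDerivAt (fun s => c * log s - g s) (c * t⁻¹ - g' t) t :=
    fun t ht => ((hasDerivAt_log (ha.trans_le ht.1).ne').const_mul c).sub (hg t ht)
  have hmono : MonotoneOn (fun s => c * log s - g s) (Icc a b) := by
    refine monotoneOn_of_hasDerivWithinAt_nonneg (convex_Icc a b)
      (fun t ht => (hderiv t ht).continuousAt.continuousWithinAt)
      (fun t ht => (hderiv t (interior_subset ht)).hasDerivWithinAt) fun t ht => ?_
    have ht := interior_subset ht
    have ht0 : 0 < t := ha.trans_le ht.1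
    rw [sub_nonneg, ← div_eq_mul_inv, le_div_iff₀ ht0, mul_comm]
    exact hbound t ht
  have := hmono (left_mem_Icc.2 hab) (right_mem_Icc.2 hab) hab
  simp only at this
  linarith

theorem stmt_2_general (x0 : ℝ) (f f' f'' : ℝ → ℝ)
    (hx0 : 1 ≤ x0)
    (hd2 : ∀ x ∈ Set.Ici x0, HasDerivAt f' (f'' x) x)
    (hpos : ∀ x ∈ Set.Ici x0, 0 < f x ∧ 0 < f' x ∧ 0 < f'' x)
    (hdbl : ∀ x y : ℝ, x0 ≤ x → x ≤ y → y ≤ 2 * x → f'' x / 2 ≤ f'' y ∧ f'' y ≤ f'' x) :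
    ∀ x : ℝ, x0 ≤ x → f' x - f' x0 ≤ 2 * x * f'' x * Real.log x := by
  intro x hx
  have hx0pos : 0 < x0 := zero_lt_one.trans_le hx0
  have hf''0 : ∀ y, x0 ≤ y → 0 ≤ f'' y := fun y hy => (hpos y hy).2.2.le
  have hhalf : ∀ x y, x0 ≤ x → x ≤ y → y ≤ 2 * x → f'' x / 2 ≤ f'' y :=
    fun x y h₁ h₂ h₃ => (hdbl x y h₁ h₂ h₃).1
  have hmul : ∀ t ∈ Icc x0 x, t * f'' t ≤ 2 * x * f'' x := fun t ht =>
    mul_le_two_mul_mul_of_half_le hx0pos hhalf hf''0 ht.1 ht.2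
  have hcmp := sub_le_mul_log_sub_log_of_mul_deriv_le hx0pos hx (fun t ht => hd2 t ht.1) hmul
  have hc : 0 ≤ 2 * x * f'' x := by nlinarith [hf''0 x hx]
  linarith [mul_nonneg hc (log_nonneg hx0)]

theorem stmt_2 (x0 : ℝ) (f f' f'' : ℝ → ℝ)
    (hx0 : 1 ≤ x0)
    (hd1 : ∀ x ∈ Set.Ici x0, HasDerivAt f (f' x) x)
    (hd2 : ∀ x ∈ Set.Ici x0, HasDerivAt f' (f'' x) x)
    (hcont : ContinuousOn f'' (Set.Ici x0))
    (hpos : ∀ x ∈ Set.Ici x0, 0 < f x ∧ 0 < f' x ∧ 0 < f'' x)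
    (hdbl : ∀ x y : ℝ, x0 ≤ x → x ≤ y → y ≤ 2 * x → f'' x / 2 ≤ f'' y ∧ f'' y ≤ f'' x) :
    ∀ x : ℝ, x0 ≤ x → f' x - f' x0 ≤ 2 * x * f'' x * Real.log x :=
  stmt_2_general x0 f f' f'' hx0 hd2 hpos hdbl
end

section
/- Let x0 ≥ 1 and f : [x0, ∞) → ℝ be twice continuously differentiable with f, f', f'' > 0, and suppose that for all x0 ≤ x ≤ y ≤ 2x we have f''(x)/2 ≤ f''(y) ≤ f''(x). Then for all x, y with 2x0 ≤ x ≤ y ≤ 2x we have f'(y) ≤ 3·f'(x). -/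
/-!
Since `f''` decreases on dyadic ranges, the mean value theorem on `[x/2, x]` gives
`(x/2) f''(x) ≤ f'(x) - f'(x/2) < f'(x)`, while on `[x, y] ⊆ [x, 2x]` it gives
`f'(y) - f'(x) ≤ (y - x) f''(x) ≤ x f''(x)`. Combining, `f'(y) ≤ 3 f'(x)`.
-/

open Set

theorem sub_le_mul_sub_of_hasDerivAt_le {g g' : ℝ → ℝ} {a b C : ℝ} (hab : a ≤ b)
    (hg : ∀ t ∈ Icc a b, HasDerivAt g (g' t) t) (hle : ∀ t ∈ Ioo a b, g' t ≤ C) :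
    g b - g a ≤ C * (b - a) := by
  refine (convex_Icc a b).image_sub_le_mul_sub_of_deriv_le
    (fun t ht => (hg t ht).continuousAt.continuousWithinAt) ?_ ?_ a ⟨le_rfl, hab⟩ b ⟨hab, le_rfl⟩ hab
  · rw [interior_Icc]
    exact fun t ht => (hg t (Ioo_subset_Icc_self ht)).differentiableAt.differentiableWithinAt
  · rw [interior_Icc]
    exact fun t ht => (hg t (Ioo_subset_Icc_self ht)).deriv ▸ hle t ht

theorem mul_sub_le_sub_of_le_hasDerivAt {g g' : ℝ → ℝ} {a b C : ℝ} (hab : a ≤ b)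
    (hg : ∀ t ∈ Icc a b, HasDerivAt g (g' t) t) (hle : ∀ t ∈ Ioo a b, C ≤ g' t) :
    C * (b - a) ≤ g b - g a := by
  refine (convex_Icc a b).mul_sub_le_image_sub_of_le_deriv
    (fun t ht => (hg t ht).continuousAt.continuousWithinAt) ?_ ?_ a ⟨le_rfl, hab⟩ b ⟨hab, le_rfl⟩ hab
  · rw [interior_Icc]
    exact fun t ht => (hg t (Ioo_subset_Icc_self ht)).differentiableAt.differentiableWithinAt
  · rw [interior_Icc]
    exact fun t ht => (hg t (Ioo_subset_Icc_self ht)).deriv ▸ hle t ht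

theorem stmt_3_general (x0 : ℝ) (f f' f'' : ℝ → ℝ)
    (hd2 : ∀ x ∈ Set.Ici x0, HasDerivAt f' (f'' x) x)
    (hpos : ∀ x ∈ Set.Ici x0, 0 < f x ∧ 0 < f' x ∧ 0 < f'' x)
    (hdbl : ∀ x y : ℝ, x0 ≤ x → x ≤ y → y ≤ 2 * x → f'' x / 2 ≤ f'' y ∧ f'' y ≤ f'' x) :
    ∀ x y : ℝ, 2 * x0 ≤ x → x ≤ y → y ≤ 2 * x → f' y ≤ 3 * f' x := by
  intro x y hx hxy hy
  have hx_half : x0 ≤ x / 2 := by linarith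
  have hx_ge : x0 ≤ x := by linarith
  have lower : f'' x * (x - x / 2) ≤ f' x - f' (x / 2) :=
    mul_sub_le_sub_of_le_hasDerivAt (by linarith)
      (fun t ht => hd2 t (hx_half.trans ht.1))
      (fun t ht => (hdbl t x (hx_half.trans ht.1.le) ht.2.le (by linarith [ht.1])).2)
  have upper : f' y - f' x ≤ f'' x * (y - x) :=
    sub_le_mul_sub_of_hasDerivAt_le hxy
      (fun t ht => hd2 t (hx_ge.trans ht.1))
      (fun t ht => (hdbl x t hx_ge ht.1.le (by linarith [ht.2])).2)
  have hf'_half : 0 < f' (x / 2) := (hpos _ hx_half).2.1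
  have hf''_x : 0 < f'' x := (hpos x hx_ge).2.2
  nlinarith [mul_le_mul_of_nonneg_left (show y - x ≤ x by linarith) hf''_x.le]

theorem stmt_3 (x0 : ℝ) (f f' f'' : ℝ → ℝ)
    (hx0 : 1 ≤ x0)
    (hd1 : ∀ x ∈ Set.Ici x0, HasDerivAt f (f' x) x)
    (hd2 : ∀ x ∈ Set.Ici x0, HasDerivAt f' (f'' x) x)
    (hcont : ContinuousOn f'' (Set.Ici x0))
    (hpos : ∀ x ∈ Set.Ici x0, 0 < f x ∧ 0 < f' x ∧ 0 < f'' x)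
    (hdbl : ∀ x y : ℝ, x0 ≤ x → x ≤ y → y ≤ 2 * x → f'' x / 2 ≤ f'' y ∧ f'' y ≤ f'' x) :
    ∀ x y : ℝ, 2 * x0 ≤ x → x ≤ y → y ≤ 2 * x → f' y ≤ 3 * f' x :=
  stmt_3_general x0 f f' f'' hd2 hpos hdbl
end

section
/- Let x0 ≥ 1 and f : [x0, ∞) → ℝ be twice continuously differentiable with f, f', f'' > 0, satisfying f''(x)/2 ≤ f''(y) ≤ f''(x) whenever x0 ≤ x ≤ y ≤ 2x. Then there exists a constant C > 0 such that f''(y) ≥ C/y for all y ≥ x0; consequently f'(y) → ∞ and f(y) → ∞ as y → ∞. -/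
/-!
On `[x0, 2 x0]` the doubling condition gives `f'' y ≥ f'' x0 / 2 ≥ c / y` with
`c = f'' x0 * x0 / 2`, and the bound `c / y` survives every doubling of `y`, because the
condition loses exactly the factor `2` that `c / y` loses. Integrating `f'' ≥ c / y` makes `f'`
grow like `c log y`; then `f' ≥ f' x0 > 0` makes `f` grow at least linearly.
-/

open Set Filter Real

theorem div_le_of_doubling {g : ℝ → ℝ} {x0 : ℝ} (hx0 : 0 < x0)
    (hdbl : ∀ x y : ℝ, x0 ≤ x → x ≤ y → y ≤ 2 * x → g x / 2 ≤ g y) {y : ℝ} (hy : x0 ≤ y) :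
    g x0 * x0 / 2 / y ≤ g y := by
  -- `x = y` in the doubling condition gives `g x / 2 ≤ g x`.
  have hg0 : 0 ≤ g x0 := by linarith [hdbl x0 x0 le_rfl le_rfl (by linarith)]
  have dyadic : ∀ k : ℕ, ∀ y, x0 ≤ y → y ≤ 2 ^ k * x0 → g x0 * x0 / 2 / y ≤ g y := by
    intro k
    induction k with
    | zero =>
      intro y hy hyk
      have hy' : y = x0 := le_antisymm (by simpa using hyk) hy
      rw [hy', div_right_comm, mul_div_cancel_right₀ _ hx0.ne']
      linarith
    | succ k ih =>
      intro y hy hyk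
      have hypos : 0 < y := hx0.trans_le hy
      rcases le_or_gt y (2 * x0) with hy2 | hy2
      · calc g x0 * x0 / 2 / y ≤ g x0 * y / 2 / y := by gcongr
          _ = g x0 / 2 := by field_simp
          _ ≤ g y := hdbl x0 y le_rfl hy hy2
      · have hhalf := ih (y / 2) (by linarith) (by rw [pow_succ] at hyk; linarith)
        calc g x0 * x0 / 2 / y = g x0 * x0 / 2 / (y / 2) / 2 := by field_simp
          _ ≤ g (y / 2) / 2 := by linarith
          _ ≤ g y := hdbl (y / 2) y (by linarith) (by linarith) (by linarith)
  obtain ⟨k, hk⟩ := pow_unbounded_of_one_lt (y / x0) one_lt_two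
  exact dyadic k y hy ((div_le_iff₀ hx0).1 hk.le)

theorem sub_le_sub_of_hasDerivAt_le {f g f' g' : ℝ → ℝ} {a b : ℝ}
    (hf : ∀ x ∈ Ici a, HasDerivAt f (f' x) x) (hg : ∀ x ∈ Ici a, HasDerivAt g (g' x) x)
    (hle : ∀ x ∈ Ioi a, g' x ≤ f' x) (hab : a ≤ b) :
    g b - g a ≤ f b - f a := by
  have hmono : MonotoneOn (fun x => f x - g x) (Ici a) := by
    refine monotoneOn_of_hasDerivWithinAt_nonneg (convex_Ici a) (f' := fun x => f' x - g' x)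
      (fun x hx => ((hf x hx).sub (hg x hx)).continuousAt.continuousWithinAt)
      (fun x hx => ?_) (fun x hx => ?_) <;> rw [interior_Ici] at hx
    · exact ((hf x (Ioi_subset_Ici_self hx)).sub (hg x (Ioi_subset_Ici_self hx))).hasDerivWithinAt
    · exact sub_nonneg.2 (hle x hx)
  linarith [hmono self_mem_Ici hab hab]

theorem tendsto_atTop_of_hasDerivAt_ge {f g f' g' : ℝ → ℝ} {a : ℝ}
    (hf : ∀ x ∈ Ici a, HasDerivAt f (f' x) x) (hg : ∀ x ∈ Ici a, HasDerivAt g (g' x) x)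
    (hle : ∀ x ∈ Ioi a, g' x ≤ f' x) (hg_top : Tendsto g atTop atTop) :
    Tendsto f atTop atTop := by
  refine tendsto_atTop_mono' _ ?_ (tendsto_atTop_add_const_right _ (f a - g a) hg_top)
  filter_upwards [eventually_ge_atTop a] with x hx
  linarith [sub_le_sub_of_hasDerivAt_le hf hg hle hx]

theorem stmt_4_general (x0 : ℝ) (f f' f'' : ℝ → ℝ)
    (hx0 : 1 ≤ x0)
    (hd1 : ∀ x ∈ Set.Ici x0, HasDerivAt f (f' x) x)
    (hd2 : ∀ x ∈ Set.Ici x0, HasDerivAt f' (f'' x) x)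
    (hpos : ∀ x ∈ Set.Ici x0, 0 < f x ∧ 0 < f' x ∧ 0 < f'' x)
    (hdbl : ∀ x y : ℝ, x0 ≤ x → x ≤ y → y ≤ 2 * x → f'' x / 2 ≤ f'' y ∧ f'' y ≤ f'' x) :
    (∃ C : ℝ, 0 < C ∧ ∀ y : ℝ, x0 ≤ y → C / y ≤ f'' y) ∧
      Filter.Tendsto f' Filter.atTop Filter.atTop ∧
      Filter.Tendsto f Filter.atTop Filter.atTop := by
  have hx0' : 0 < x0 := by linarith
  set C := f'' x0 * x0 / 2
  have hC : 0 < C := by have := (hpos x0 self_mem_Ici).2.2; positivity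
  have hlow : ∀ y, x0 ≤ y → C / y ≤ f'' y := fun y =>
    div_le_of_doubling hx0' (fun x y h₁ h₂ h₃ => (hdbl x y h₁ h₂ h₃).1)
  have hf'_top : Tendsto f' atTop atTop :=
    tendsto_atTop_of_hasDerivAt_ge hd2
      (fun x hx => (hasDerivAt_log (hx0'.trans_le hx).ne').const_mul C)
      (fun x hx => by simpa [div_eq_mul_inv] using hlow x (Ioi_subset_Ici_self hx))
      (tendsto_log_atTop.const_mul_atTop hC)
  have hf'_ge : ∀ x ∈ Ioi x0, f' x0 ≤ f' x := fun x hx => by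
    linarith [sub_le_sub_of_hasDerivAt_le hd2 (fun y _ => hasDerivAt_const y (0 : ℝ))
      (fun y hy => (hpos y (Ioi_subset_Ici_self hy)).2.2.le) (Ioi_subset_Ici_self hx)]
  refine ⟨⟨C, hC, hlow⟩, hf'_top, tendsto_atTop_of_hasDerivAt_ge hd1
    (fun x _ => by simpa using (hasDerivAt_id x).const_mul (f' x0)) hf'_ge
    (tendsto_id.const_mul_atTop (hpos x0 self_mem_Ici).2.1)⟩

theorem stmt_4 (x0 : ℝ) (f f' f'' : ℝ → ℝ)
    (hx0 : 1 ≤ x0)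
    (hd1 : ∀ x ∈ Set.Ici x0, HasDerivAt f (f' x) x)
    (hd2 : ∀ x ∈ Set.Ici x0, HasDerivAt f' (f'' x) x)
    (hcont : ContinuousOn f'' (Set.Ici x0))
    (hpos : ∀ x ∈ Set.Ici x0, 0 < f x ∧ 0 < f' x ∧ 0 < f'' x)
    (hdbl : ∀ x y : ℝ, x0 ≤ x → x ≤ y → y ≤ 2 * x → f'' x / 2 ≤ f'' y ∧ f'' y ≤ f'' x) :
    (∃ C : ℝ, 0 < C ∧ ∀ y : ℝ, x0 ≤ y → C / y ≤ f'' y) ∧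
      Filter.Tendsto f' Filter.atTop Filter.atTop ∧
      Filter.Tendsto f Filter.atTop Filter.atTop :=
  stmt_4_general x0 f f' f'' hx0 hd1 hd2 hpos hdbl
end

section
/- Let I be a finite interval of integers and let (a_n)_{n ∈ I} be complex numbers. Then for every integer R ≥ 1, |∑_{n∈I} a_n|² ≤ ((|I|−1+R)/R)·∑_{n∈I} |a_n|² + 2·((|I|−1+R)/R)·∑_{1≤r<R} (1 − r/R)·Re(∑_{n∈I, n+r∈I} a_n · conj(a_{n+r})). -/
/-!
Extend `f` by zero outside `I`. Each of the `R` shifted windows `m + r` (`r < R`), with `m` running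
over `J = [a - R + 1, b]`, sees the whole of `I`, so `R • ∑ f = ∑ₘ ∑_{r<R} f (m + r)`.
Cauchy–Schwarz over the `#I + R - 1` values of `m` and expanding the square turns the right-hand
side into a sum over pairs `r, s < R` of the autocorrelation of `f` at lag `|r - s|`; lag `d ≥ 1`
occurs for `2 (R - d)` of these pairs.
-/

open Finset

theorem norm_sum_sq_le_card_mul_sum_norm_sq {ι E : Type*} [SeminormedAddCommGroup E]
    (s : Finset ι) (z : ι → E) : ‖∑ i ∈ s, z i‖ ^ 2 ≤ #s * ∑ i ∈ s, ‖z i‖ ^ 2 :=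
  (pow_le_pow_left₀ (norm_nonneg _) (norm_sum_le _ _) 2).trans sq_sum_le_card_mul_sum_sq

theorem Complex.norm_sum_sq_eq_sum_sum_re_mul_conj {ι : Type*} (s : Finset ι) (z : ι → ℂ) :
    ‖∑ i ∈ s, z i‖ ^ 2 = ∑ i ∈ s, ∑ j ∈ s, (z i * starRingEnd ℂ (z j)).re := by
  rw [← Complex.ofReal_re (‖_‖ ^ 2), Complex.ofReal_pow, ← Complex.mul_conj', map_sum,
    sum_mul_sum, Complex.re_sum]
  simp only [Complex.re_sum]

theorem sum_range_sum_range_dist {M : Type*} [CommRing M] (c : ℕ → M) (R : ℕ) :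
    ∑ r ∈ range R, ∑ s ∈ range R, c (r.dist s) =
      R * c 0 + 2 * ∑ d ∈ Ico 1 R, ((R : M) - d) * c d := by
  induction R with
  | zero => simp
  | succ R ih =>
    have hrow : ∑ r ∈ range R, c (r.dist R) = ∑ d ∈ Ico 1 (R + 1), c d := by
      rw [← sum_range_reflect, sum_Ico_eq_sum_range, Nat.add_sub_cancel]
      refine sum_congr rfl fun r hr => ?_
      have hr := mem_range.1 hr
      rw [Nat.dist_eq_sub_of_le (by omega)]
      congr 1
      omega
    have htop :
        ∑ d ∈ Ico 1 (R + 1), ((R : M) - d) * c d = ∑ d ∈ Ico 1 R, ((R : M) - d) * c d := by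
      rcases Nat.eq_zero_or_pos R with rfl | hR
      · simp
      · rw [sum_Ico_succ_top hR, sub_self, zero_mul, add_zero]
    simp only [sum_range_succ, sum_add_distrib, ih, Nat.dist_self]
    simp only [Nat.dist_comm R, hrow, ← htop, Nat.cast_succ]
    rw [show ∑ d ∈ Ico 1 (R + 1), ((R : M) + 1 - d) * c d
        = ∑ d ∈ Ico 1 (R + 1), ((R : M) - d) * c d + ∑ d ∈ Ico 1 (R + 1), c d by
      rw [← sum_add_distrib]; exact sum_congr rfl fun d _ => by ring]
    ring

theorem sum_comp_add_eq_sum_of_sub_mem {G M : Type*} [AddCommGroup G] [AddCommMonoid M]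
    {s t : Finset G} {k : G} (h : G → M) (hs : ∀ n ∉ s, h n = 0) (ht : ∀ n ∈ s, n - k ∈ t) :
    ∑ m ∈ t, h (m + k) = ∑ n ∈ s, h n := by
  have hsub : s ⊆ t.map (addRightEmbedding k) := fun n hn =>
    mem_map.2 ⟨n - k, ht n hn, sub_add_cancel n k⟩
  rw [sum_subset hsub fun n _ hn => hs n hn, sum_map]
  rfl

def autocorrelation (I : Finset ℤ) (f : ℤ → ℂ) (d : ℤ) : ℂ :=
  ∑ n ∈ I.filter (fun n => n + d ∈ I), f n * starRingEnd ℂ (f (n + d))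

theorem autocorrelation_zero_re (I : Finset ℤ) (f : ℤ → ℂ) :
    (autocorrelation I f 0).re = ∑ n ∈ I, ‖f n‖ ^ 2 := by
  simp only [autocorrelation, add_zero, filter_true_of_mem fun _ h => h, Complex.re_sum,
    Complex.mul_conj', ← Complex.ofReal_pow, Complex.ofReal_re]

theorem sum_indicator_mul_conj_indicator {I J : Finset ℤ} {k : ℤ} (f : ℤ → ℂ)
    (hJ : ∀ n ∈ I, n - k ∈ J) (d : ℤ) :
    ∑ m ∈ J, (I : Set ℤ).indicator f (m + k) *
      starRingEnd ℂ ((I : Set ℤ).indicator f (m + k + d)) = autocorrelation I f d := by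
  set g := (I : Set ℤ).indicator f
  have hprod : ∀ n, g n * starRingEnd ℂ (g (n + d)) =
      ((I.filter fun n => n + d ∈ I : Finset ℤ) : Set ℤ).indicator
        (fun n => f n * starRingEnd ℂ (f (n + d))) n := by
    intro n
    by_cases hn : n ∈ I <;> by_cases hnd : n + d ∈ I <;> simp [g, hn, hnd]
  simp only [hprod]
  rw [sum_comp_add_eq_sum_of_sub_mem _ (fun n hn => Set.indicator_of_notMem hn _)
    fun n hn => hJ n (mem_filter.1 hn).1]
  exact sum_congr rfl fun n hn => Set.indicator_of_mem hn _

theorem re_sum_indicator_mul_conj_indicator {I J : Finset ℤ} (f : ℤ → ℂ) {r s : ℕ}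
    (hr : ∀ n ∈ I, n - r ∈ J) (hs : ∀ n ∈ I, n - s ∈ J) :
    ∑ m ∈ J, ((I : Set ℤ).indicator f (m + r) *
      starRingEnd ℂ ((I : Set ℤ).indicator f (m + s))).re =
      (autocorrelation I f (r.dist s)).re := by
  wlog hrs : r ≤ s generalizing r s
  · have hre : ∀ z w : ℂ, (z * starRingEnd ℂ w).re = (w * starRingEnd ℂ z).re := fun z w => by
      rw [← Complex.conj_re, map_mul, Complex.conj_conj, mul_comm]
    rw [Nat.dist_comm, ← this hs hr (le_of_not_ge hrs)]
    exact sum_congr rfl fun m _ => hre _ _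
  obtain ⟨d, rfl⟩ := Nat.exists_eq_add_of_le hrs
  simp only [Nat.dist_eq_sub_of_le hrs, Nat.add_sub_cancel_left, Nat.cast_add, ← add_assoc,
    ← Complex.re_sum, sum_indicator_mul_conj_indicator f hr]

theorem van_der_corput_of_sub_mem (I J : Finset ℤ) (f : ℤ → ℂ) (R : ℕ)
    (hJ : ∀ n ∈ I, ∀ r < R, n - r ∈ J) :
    (R : ℝ) ^ 2 * ‖∑ n ∈ I, f n‖ ^ 2 ≤ #J * (R * ∑ n ∈ I, ‖f n‖ ^ 2 +
      2 * ∑ d ∈ Ico 1 R, ((R : ℝ) - d) * (autocorrelation I f d).re) := by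
  set g := (I : Set ℤ).indicator f
  have hwindow : ∀ r < R, ∑ m ∈ J, g (m + r) = ∑ n ∈ I, f n := fun r hr => by
    rw [sum_comp_add_eq_sum_of_sub_mem g (fun n hn => Set.indicator_of_notMem hn f)
      fun n hn => hJ n hn r hr]
    exact sum_congr rfl fun n hn => Set.indicator_of_mem hn f
  calc (R : ℝ) ^ 2 * ‖∑ n ∈ I, f n‖ ^ 2 = ‖∑ m ∈ J, ∑ r ∈ range R, g (m + r)‖ ^ 2 := by
        rw [sum_comm, sum_congr rfl fun r hr => hwindow r (mem_range.1 hr), sum_const,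
          card_range, nsmul_eq_mul, norm_mul, Complex.norm_natCast, mul_pow]
    _ ≤ #J * ∑ m ∈ J, ‖∑ r ∈ range R, g (m + r)‖ ^ 2 :=
        norm_sum_sq_le_card_mul_sum_norm_sq _ _
    _ = #J * ∑ r ∈ range R, ∑ s ∈ range R, (autocorrelation I f (r.dist s)).re := by
        simp only [Complex.norm_sum_sq_eq_sum_sum_re_mul_conj]
        rw [sum_comm]
        congr 1
        refine sum_congr rfl fun r hr => ?_
        rw [sum_comm]
        exact sum_congr rfl fun s hs => re_sum_indicator_mul_conj_indicator f
          (fun n hn => hJ n hn r (mem_range.1 hr)) fun n hn => hJ n hn s (mem_range.1 hs)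
    _ = _ := by
        rw [sum_range_sum_range_dist (fun d => (autocorrelation I f d).re),
          Nat.cast_zero, autocorrelation_zero_re]

theorem stmt_5 (a b : ℤ) (f : ℤ → ℂ) (R : ℕ) (hR : 1 ≤ R) :
    ‖∑ n ∈ Finset.Icc a b, f n‖ ^ 2 ≤
      (((Finset.Icc a b).card - 1 + R : ℝ) / R) * ∑ n ∈ Finset.Icc a b, ‖f n‖ ^ 2 +
        2 * (((Finset.Icc a b).card - 1 + R : ℝ) / R) *
          ∑ r ∈ Finset.Ico 1 R, (1 - (r : ℝ) / R) *
            (∑ n ∈ (Finset.Icc a b).filter (fun n => n + (r : ℤ) ∈ Finset.Icc a b),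
              f n * (starRingEnd ℂ) (f (n + (r : ℤ)))).re := by
  rcases lt_or_ge b a with hba | hab
  · simp [Icc_eq_empty_of_lt hba]
  have hcard : (#(Icc (a - R + 1) b) : ℝ) = #(Icc a b) - 1 + R := by
    have hcardℤ : (#(Icc (a - R + 1) b) : ℤ) = #(Icc a b) - 1 + R := by
      simp only [Int.card_Icc]
      omega
    exact_mod_cast hcardℤ
  have hvdc := van_der_corput_of_sub_mem (Icc a b) (Icc (a - R + 1) b) f R
    fun n hn r hr => by rw [mem_Icc] at hn ⊢; omega
  have hweights : ∀ d : ℕ, (R : ℝ) - d = R * (1 - d / R) := fun d => by field_simp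
  simp only [hcard, hweights, mul_assoc, ← mul_sum] at hvdc
  unfold autocorrelation at hvdc
  refine le_of_mul_le_mul_left (hvdc.trans_eq ?_) (by positivity : (0 : ℝ) < R ^ 2)
  field_simp
end

section
/- Let λ ≥ 0 be an integer and s_λ(n) = s(n mod 2^λ) the truncated binary sum-of-digits function. If u, v, E are nonnegative integers with u ≤ v ≤ u + E, E < 2^λ, and u mod 2^λ < 2^λ − E, then s(v) − s(u) = s_λ(v) − s_λ(u). -/
/-- The binary sum-of-digits function. -/
def binDigitSum (n : ℕ) : ℕ := (Nat.digits 2 n).sum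

/-- The truncated binary sum-of-digits function. -/
def truncDigitSum (lam : ℕ) (n : ℕ) : ℕ := binDigitSum (n % 2 ^ lam)

theorem Nat.add_div_eq_of_mod_add_lt {a b c : ℕ} (h : a % c + b < c) : (a + b) / c = a / c := by
  rw [Nat.add_div_eq_of_add_mod_lt (by rwa [Nat.mod_eq_of_lt (by omega : b < c)]),
    Nat.div_eq_of_lt (by omega : b < c), add_zero]

theorem Nat.digits_sum_eq_mod_pow_add_div_pow {b : ℕ} (hb : 1 < b) (k n : ℕ) :
    (b.digits n).sum = (b.digits (n % b ^ k)).sum + (b.digits (n / b ^ k)).sum := by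
  rcases Nat.eq_zero_or_pos (n / b ^ k) with hdiv | hdiv
  · have hn : n < b ^ k := (Nat.div_eq_zero_iff.mp hdiv).resolve_left (by positivity)
    simp [hdiv, Nat.mod_eq_of_lt hn]
  · have hlen : (b.digits (n % b ^ k)).length ≤ k :=
      (Nat.digits_length_le_iff hb _).mpr (Nat.mod_lt _ (by positivity))
    obtain ⟨j, hj⟩ := Nat.le.dest hlen
    -- the digits of `n` are those of `n % b ^ k`, padded with zeros to length `k`,
    -- followed by those of `n / b ^ k`
    have hdigits := Nat.digits_append_zeroes_append_digits (k := j) (n := n % b ^ k) hb hdiv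
    rw [hj, Nat.mod_add_div] at hdigits
    simp [← hdigits]

theorem binDigitSum_eq_truncDigitSum_add_div_pow (k n : ℕ) :
    binDigitSum n = truncDigitSum k n + binDigitSum (n / 2 ^ k) :=
  Nat.digits_sum_eq_mod_pow_add_div_pow one_lt_two k n

theorem binDigitSum_sub_eq_truncDigitSum_sub {k m n : ℕ} (h : m / 2 ^ k = n / 2 ^ k) :
    (binDigitSum m : ℤ) - binDigitSum n = (truncDigitSum k m : ℤ) - truncDigitSum k n := by
  rw [binDigitSum_eq_truncDigitSum_add_div_pow k m,
    binDigitSum_eq_truncDigitSum_add_div_pow k n, h]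
  push_cast
  ring

theorem stmt_9_general (lam u v E : ℕ) (huv : u ≤ v) (hvE : v ≤ u + E)
    (hu : u % 2 ^ lam < 2 ^ lam - E) :
    (binDigitSum v : ℤ) - binDigitSum u =
      (truncDigitSum lam v : ℤ) - truncDigitSum lam u := by
  obtain ⟨d, rfl⟩ := Nat.le.dest huv
  exact binDigitSum_sub_eq_truncDigitSum_sub (Nat.add_div_eq_of_mod_add_lt (by omega))

theorem stmt_9 (lam u v E : ℕ) (huv : u ≤ v) (hvE : v ≤ u + E) (hE : E < 2 ^ lam)
    (hu : u % 2 ^ lam < 2 ^ lam - E) :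
    (binDigitSum v : ℤ) - binDigitSum u =
      (truncDigitSum lam v : ℤ) - truncDigitSum lam u :=
  stmt_9_general lam u v E huv hvE hu
end

section
/- Let J be an interval in ℝ containing N integers and f : J → ℝ twice continuously differentiable with Λ ≤ |f''(x)| ≤ 2Λ on J, Λ > 0. Then for every integer h ≥ 1 and K ≥ 1, ∑_{n ∈ J ∩ ℤ} e(h·f(n)/K) ≪ N·Λ^{1/2}·(h/K)^{1/2} + Λ^{−1/2}·(K/h)^{1/2}, with an absolute implied constant. -/
/-- e(x) = exp(2πix). -/
noncomputable def e (x : ℝ) : ℂ := Complex.exp (2 * Real.pi * Complex.I * x)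

open Real Set
lemma e_eq (x : ℝ) : e x = Complex.exp ((2 * Real.pi * x : ℝ) * Complex.I) := by
  unfold e; push_cast; ring_nf
lemma e_norm (x : ℝ) : ‖e x‖ = 1 := by
  rw [e_eq]; exact Complex.norm_exp_ofReal_mul_I _
lemma e_add (x y : ℝ) : e (x + y) = e x * e y := by
  unfold e; rw [← Complex.exp_add]; push_cast; ring_nf

lemma e_int (m : ℤ) : e (m : ℝ) = 1 := by
  unfold e
  have : 2 * (Real.pi:ℂ) * Complex.I * (m:ℝ) = m * (2 * Real.pi * Complex.I) := by push_cast; ring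
  rw [this, Complex.exp_int_mul_two_pi_mul_I]

lemma e_conj (x : ℝ) : (starRingEnd ℂ) (e x) = e (-x) := by
  rw [e_eq, e_eq, ← Complex.exp_conj]
  congr 1
  rw [map_mul, Complex.conj_ofReal, Complex.conj_I]
  push_cast; ring

noncomputable def cc (β : ℝ) : ℂ := -(1/2) - (Complex.I/2) * (Real.cos (π*β) / Real.sin (π*β))

lemma e_cos_sin (β : ℝ) : e β = ((Real.cos (2*π*β) : ℝ) : ℂ) + (Real.sin (2*π*β) : ℝ) * Complex.I := by
  rw [e_eq, Complex.exp_mul_I]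
  push_cast [Complex.ofReal_cos, Complex.ofReal_sin]
  norm_cast

lemma cc_mul (β : ℝ) (hs : Real.sin (π*β) ≠ 0) : cc β * (e β - 1) = 1 := by
  have h2 : (2:ℝ)*π*β = 2*(π*β) := by ring
  rw [e_cos_sin, cc, h2, Real.cos_two_mul', Real.sin_two_mul]
  have hpyth := Real.sin_sq_add_cos_sq (π*β)
  set s := Real.sin (π*β); set c := Real.cos (π*β)
  have hpC : (s:ℂ)^2 + (c:ℂ)^2 = 1 := by exact_mod_cast congrArg (Complex.ofReal) hpyth
  have hsC : (s:ℂ) ≠ 0 := by exact_mod_cast hs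
  push_cast
  field_simp
  ring_nf
  linear_combination (-(2*(s:ℂ)*(c:ℂ)^2)) * Complex.I_sq + ((s:ℂ) - Complex.I*(c:ℂ)) * hpC

lemma sin_ge {δ β : ℝ} (hδ : 0 < δ) (h1 : δ ≤ β) (h2 : β ≤ 1 - δ) :
    2 * δ ≤ Real.sin (π * β) := by
  have hδ2 : δ ≤ 1/2 := by linarith
  rcases le_or_gt β (1/2) with hb | hb
  · have := Real.mul_le_sin (x := π * β) (by nlinarith [Real.pi_pos])
      (by nlinarith [Real.pi_pos])
    have hπ : (0:ℝ) < π := Real.pi_pos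
    calc 2*δ ≤ 2*β := by linarith
    _ = 2/π * (π * β) := by field_simp
    _ ≤ Real.sin (π * β) := this
  · have hs : Real.sin (π * β) = Real.sin (π * (1 - β)) := by
      rw [show π * (1 - β) = π - π * β by ring, Real.sin_pi_sub]
    rw [hs]
    have := Real.mul_le_sin (x := π * (1-β)) (by nlinarith [Real.pi_pos])
      (by nlinarith [Real.pi_pos])
    have hπ : (0:ℝ) < π := Real.pi_pos
    calc 2*δ ≤ 2*(1-β) := by linarith
    _ = 2/π * (π * (1-β)) := by field_simp
    _ ≤ _ := this

lemma cot_anti {δ β β' : ℝ} (hδ : 0 < δ) (h1 : δ ≤ β) (hbb : β ≤ β') (h2 : β' ≤ 1 - δ) :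
    Real.cos (π * β') / Real.sin (π * β') ≤ Real.cos (π * β) / Real.sin (π * β) := by
  have hs : 0 < Real.sin (π * β) := lt_of_lt_of_le (by linarith) (sin_ge hδ h1 (by linarith))
  have hs' : 0 < Real.sin (π * β') := lt_of_lt_of_le (by linarith) (sin_ge hδ (by linarith) h2)
  rw [div_le_div_iff₀ hs' hs]
  have key : 0 ≤ Real.sin (π * β' - π * β) := by
    apply Real.sin_nonneg_of_nonneg_of_le_pi
    · nlinarith [Real.pi_pos]
    · nlinarith [Real.pi_pos]
  rw [Real.sin_sub] at key
  nlinarith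

lemma cot_abs_le {δ β : ℝ} (hδ : 0 < δ) (h1 : δ ≤ β) (h2 : β ≤ 1 - δ) :
    |Real.cos (π * β) / Real.sin (π * β)| ≤ 1 / (2*δ) := by
  have hs : 2*δ ≤ Real.sin (π * β) := sin_ge hδ h1 h2
  rw [abs_div, abs_of_pos (by linarith : (0:ℝ) < Real.sin (π*β))]
  apply div_le_div₀ (by positivity) (Real.abs_cos_le_one _) (by linarith) hs

lemma abel_id (m : ℕ) (c u : ℕ → ℂ) :
    ∑ j ∈ Finset.range (m+1), c j * (u (j+1) - u j) =
      c m * u (m+1) - c 0 * u 0 - ∑ j ∈ Finset.range m, (c (j+1) - c j) * u (j+1) := by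
  induction m with
  | zero => simp; ring
  | succ n ih => rw [Finset.sum_range_succ, ih, Finset.sum_range_succ]; ring

lemma KL (g h : ℝ → ℝ) (a b δ : ℝ) (hδ : 0 < δ) (hδ2 : δ ≤ 1/2)
    (hg : ∀ x ∈ Icc a b, HasDerivAt g (h x) x)
    (hmono : MonotoneOn h (Icc a b))
    (hrange : ∀ x ∈ Icc a b, δ ≤ h x ∧ h x ≤ 1 - δ) :
    ‖∑ n ∈ Finset.Icc ⌈a⌉ ⌊b⌋, e (g n)‖ ≤ 3 / δ := by
  have h3δ : (2:ℝ) ≤ 1/δ := by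
    rw [le_div_iff₀ hδ]; linarith
  have h1δ : (1:ℝ) ≤ 1/δ := by linarith
  by_cases hab : ⌈a⌉ ≤ ⌊b⌋
  swap
  · rw [Finset.Icc_eq_empty (by exact_mod_cast hab), Finset.sum_empty, norm_zero]
    positivity
  set A := ⌈a⌉ with hA
  set B := ⌊b⌋ with hB
  have haA : (a:ℝ) ≤ A := Int.le_ceil a
  have hBb : (B:ℝ) ≤ b := Int.floor_le b
  obtain ⟨M, hBM⟩ : ∃ M : ℕ, B = A + M := ⟨(B - A).toNat, by omega⟩
  -- reindex
  have hmap : Finset.Icc A B = (Finset.range (M+1)).map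
      ⟨fun j : ℕ => A + (j:ℤ), show Function.Injective (fun j : ℕ => A + (j:ℤ)) from by intro x y hxy; simpa using hxy⟩ := by
    ext n
    simp only [Finset.mem_Icc, Finset.mem_map, Finset.mem_range, Function.Embedding.coeFn_mk]
    constructor
    · intro hn; exact ⟨(n - A).toNat, by omega, by omega⟩
    · rintro ⟨j, hj, rfl⟩; omega
  rw [hmap, Finset.sum_map]
  simp only [Function.Embedding.coeFn_mk]
  set u : ℕ → ℂ := fun j => e (g ((A:ℝ) + j)) with hu
  have hsum : ∑ j ∈ Finset.range (M+1), e (g ((A + (j:ℤ) : ℤ) : ℝ)) = ∑ j ∈ Finset.range (M+1), u j := by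
    apply Finset.sum_congr rfl; intro j _; show _ = e (g ((A:ℝ) + j)); norm_num
  rw [hsum]
  have hunorm : ∀ j, ‖u j‖ = 1 := fun j => e_norm _
  -- membership helper
  have hAMb : ((A:ℝ) + M) ≤ b := by
    have : ((A + M : ℤ) : ℝ) ≤ b := by rw [← hBM]; exact hBb
    push_cast at this; linarith
  have hmem : ∀ x : ℝ, (A:ℝ) ≤ x → x ≤ (A:ℝ) + M → x ∈ Icc a b := by
    intro x h1 h2
    exact ⟨by linarith, by linarith⟩
  rcases Nat.eq_zero_or_pos M with hM0 | hMpos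
  · subst hM0
    rw [show (0:ℕ)+1 = 1 from rfl, Finset.sum_range_one, hunorm]
    calc (1:ℝ) ≤ 3 * (1/δ) := by linarith
    _ = 3/δ := by ring
  obtain ⟨m, rfl⟩ : ∃ m, M = m + 1 := ⟨M - 1, by omega⟩
  set β : ℕ → ℝ := fun j => g ((A:ℝ) + j + 1) - g ((A:ℝ) + j) with hβ
  have hj1m : ∀ j : ℕ, j ≤ m → (A:ℝ) + j + 1 ≤ (A:ℝ) + (m+1:ℕ) := by
    intro j hj
    have : (j:ℝ) ≤ (m:ℝ) := by exact_mod_cast hj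
    push_cast; linarith
  -- MVT: points realizing β
  have hMVT : ∀ j : ℕ, j ≤ m → ∃ x ∈ Set.Ioo ((A:ℝ)+j) ((A:ℝ)+j+1), h x = β j := by
    intro j hj
    have hsub : Icc ((A:ℝ)+j) ((A:ℝ)+j+1) ⊆ Icc a b := by
      intro x hx
      obtain ⟨h1, h2⟩ := hx
      exact hmem x (by linarith) (le_trans h2 (hj1m j hj))
    have hlt : (A:ℝ)+j < (A:ℝ)+j+1 := by linarith
    have hcont : ContinuousOn g (Icc ((A:ℝ)+j) ((A:ℝ)+j+1)) := by
      intro x hx; exact (hg x (hsub hx)).continuousAt.continuousWithinAt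
    have hderiv : ∀ x ∈ Ioo ((A:ℝ)+j) ((A:ℝ)+j+1), HasDerivAt g (h x) x := by
      intro x hx; exact hg x (hsub (Ioo_subset_Icc_self hx))
    obtain ⟨ξ, hξ, hval⟩ := exists_hasDerivAt_eq_slope g h hlt hcont hderiv
    refine ⟨ξ, hξ, ?_⟩
    rw [hval]; simp [hβ]
  choose ξ hξmem hξval using hMVT
  have hξIcc : ∀ j (hj : j ≤ m), ξ j hj ∈ Icc a b := by
    intro j hj
    obtain ⟨h1, h2⟩ := hξmem j hj
    exact hmem _ (by linarith) (le_trans (le_of_lt h2) (hj1m j hj))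
  have hβrange : ∀ j, j ≤ m → δ ≤ β j ∧ β j ≤ 1 - δ := by
    intro j hj
    rw [← hξval j hj]
    exact hrange _ (hξIcc j hj)
  have hβmono : ∀ j k (hj : j ≤ m) (hk : k ≤ m), j ≤ k → β j ≤ β k := by
    intro j k hj hk hjk
    rcases eq_or_lt_of_le hjk with rfl | hlt
    · exact le_refl _
    rw [← hξval j hj, ← hξval k hk]
    apply hmono (hξIcc j hj) (hξIcc k hk)
    obtain ⟨_, h2⟩ := hξmem j hj
    obtain ⟨h3, _⟩ := hξmem k hk
    have : (j:ℝ) + 1 ≤ (k:ℝ) := by exact_mod_cast hlt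
    linarith
  -- γ and c
  set γ : ℕ → ℝ := fun j => Real.cos (π * β j) / Real.sin (π * β j) with hγ
  set c : ℕ → ℂ := fun j => cc (β j) with hc
  have hγbd : ∀ j, j ≤ m → |γ j| ≤ 1/(2*δ) := by
    intro j hj
    exact cot_abs_le hδ (hβrange j hj).1 (hβrange j hj).2
  have hceq : ∀ j, c j = -(1/2 : ℂ) - (Complex.I/2) * ((γ j : ℝ) : ℂ) := by
    intro j
    simp only [hc, cc, hγ]
    push_cast
    ring
  have hcnorm : ∀ j, j ≤ m → ‖c j‖ ≤ 1/2 + 1/(4*δ) := by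
    intro j hj
    rw [hceq]
    calc ‖-(1/2 : ℂ) - (Complex.I/2) * ((γ j : ℝ) : ℂ)‖
        ≤ ‖-(1/2 : ℂ)‖ + ‖(Complex.I/2) * ((γ j : ℝ) : ℂ)‖ := norm_sub_le _ _
      _ = 1/2 + (1/2) * |γ j| := by
          rw [norm_neg, norm_mul]
          norm_num [Complex.norm_real, Complex.norm_I, norm_div]
      _ ≤ 1/2 + (1/2) * (1/(2*δ)) := by nlinarith [hγbd j hj, abs_nonneg (γ j)]
      _ = 1/2 + 1/(4*δ) := by ring
  have hcdiff : ∀ j, j < m → ‖c (j+1) - c j‖ = (1/2) * (γ j - γ (j+1)) := by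
    intro j hj
    have hg1 : γ (j+1) ≤ γ j :=
      cot_anti hδ (hβrange j (by omega)).1 (hβmono j (j+1) (by omega) (by omega) (by omega))
        (hβrange (j+1) (by omega)).2
    rw [hceq, hceq]
    have : -(1/2 : ℂ) - (Complex.I/2) * ((γ (j+1) : ℝ) : ℂ) - (-(1/2 : ℂ) - (Complex.I/2) * ((γ j : ℝ) : ℂ))
        = (Complex.I/2) * (((γ j - γ (j+1) : ℝ) : ℝ) : ℂ) := by push_cast; ring
    rw [this, norm_mul]
    rw [Complex.norm_real, norm_div, Complex.norm_I, Real.norm_eq_abs]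
    rw [abs_of_nonneg (show (0:ℝ) ≤ γ j - γ (j+1) by linarith)]
    norm_num
  -- key identity u j = c j * (u (j+1) - u j)
  have hkey : ∀ j, j ≤ m → u j = c j * (u (j+1) - u j) := by
    intro j hj
    have hsin : Real.sin (π * β j) ≠ 0 := by
      have := sin_ge hδ (hβrange j hj).1 (hβrange j hj).2
      intro hcon
      rw [hcon] at this
      linarith
    have hu1 : u (j+1) = u j * e (β j) := by
      simp only [hu]
      rw [← e_add]
      congr 1
      push_cast
      simp [hβ]
      ring
    rw [hu1]
    have : u j * e (β j) - u j = u j * (e (β j) - 1) := by ring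
    rw [this]
    have := cc_mul (β j) hsin
    calc u j = u j * 1 := by ring
    _ = u j * (cc (β j) * (e (β j) - 1)) := by rw [this]
    _ = c j * (u j * (e (β j) - 1)) := by rw [hc]; ring
  -- assemble
  rw [Finset.sum_range_succ]
  have hstep : ∑ j ∈ Finset.range (m+1), u j = ∑ j ∈ Finset.range (m+1), c j * (u (j+1) - u j) := by
    apply Finset.sum_congr rfl
    intro j hj
    exact hkey j (by simpa [Nat.lt_succ_iff] using hj)
  rw [hstep, abel_id]
  have hsum_tel : ∑ j ∈ Finset.range m, ‖(c (j+1) - c j) * u (j+1)‖ ≤ 1/(2*δ) + 1/(2*δ) := by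
    have : ∀ j ∈ Finset.range m, ‖(c (j+1) - c j) * u (j+1)‖ = (1/2) * (γ j - γ (j+1)) := by
      intro j hj
      rw [norm_mul, hunorm, mul_one, hcdiff j (Finset.mem_range.mp hj)]
    rw [Finset.sum_congr rfl this]
    have htel : ∑ j ∈ Finset.range m, ((1:ℝ)/2 * (γ j - γ (j+1))) = (1/2) * (γ 0 - γ m) := by
      rw [← Finset.mul_sum, Finset.sum_range_sub']
    rw [htel]
    have h0 := hγbd 0 (by omega)
    have hm := hγbd m (by omega)
    rw [abs_le] at h0 hm
    have h4 : 0 < 4 * δ := by linarith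
    obtain ⟨h01, h02⟩ := h0
    obtain ⟨hm1, hm2⟩ := hm
    nlinarith
  calc ‖(c m * u (m+1) - c 0 * u 0 - ∑ j ∈ Finset.range m, (c (j+1) - c j) * u (j+1)) + u (m+1)‖
      ≤ ‖c m * u (m+1)‖ + ‖c 0 * u 0‖ + ‖∑ j ∈ Finset.range m, (c (j+1) - c j) * u (j+1)‖ + ‖u (m+1)‖ := by
        have := norm_add_le (c m * u (m+1) - c 0 * u 0 - ∑ j ∈ Finset.range m, (c (j+1) - c j) * u (j+1)) (u (m+1))
        have h2 := norm_sub_le (c m * u (m+1) - c 0 * u 0) (∑ j ∈ Finset.range m, (c (j+1) - c j) * u (j+1))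
        have h3 := norm_sub_le (c m * u (m+1)) (c 0 * u 0)
        linarith
    _ ≤ (1/2 + 1/(4*δ)) + (1/2 + 1/(4*δ)) + (1/(2*δ) + 1/(2*δ)) + 1 := by
        have h1 : ‖c m * u (m+1)‖ ≤ 1/2 + 1/(4*δ) := by
          rw [norm_mul, hunorm, mul_one]; exact hcnorm m (le_refl _)
        have h2 : ‖c 0 * u 0‖ ≤ 1/2 + 1/(4*δ) := by
          rw [norm_mul, hunorm, mul_one]; exact hcnorm 0 (by omega)
        have h4 := le_trans (norm_sum_le _ _) hsum_tel
        rw [hunorm]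
        linarith
    _ ≤ 3/δ := by
        have e1 : 3/δ = 3*(1/δ) := by ring
        have e2 : 1/(4*δ) = (1/4)*(1/δ) := by ring
        have e3 : 1/(2*δ) = (1/2)*(1/δ) := by ring
        rw [e1, e2, e3]
        linarith

lemma trivial_bound (g : ℝ → ℝ) (A B : ℤ) :
    ‖∑ n ∈ Finset.Icc A B, e (g n)‖ ≤ ((Finset.Icc A B).card : ℝ) := by
  calc ‖∑ n ∈ Finset.Icc A B, e (g n)‖ ≤ ∑ n ∈ Finset.Icc A B, ‖e (g n)‖ := norm_sum_le _ _
  _ = ((Finset.Icc A B).card : ℝ) := by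
    simp only [e_norm, Finset.sum_const, nsmul_eq_mul, mul_one]

lemma card_le (a b : ℝ) (hab : a ≤ b) :
    ((Finset.Icc ⌈a⌉ ⌊b⌋).card : ℝ) ≤ b - a + 1 := by
  rw [Int.card_Icc]
  have h1 : (a:ℝ) ≤ ⌈a⌉ := Int.le_ceil a
  have h2 : ((⌊b⌋:ℤ):ℝ) ≤ b := Int.floor_le b
  rcases le_or_gt ⌈a⌉ ⌊b⌋ with hle | hlt
  · have : ((⌊b⌋ + 1 - ⌈a⌉).toNat : ℝ) = ((⌊b⌋:ℝ) + 1 - ⌈a⌉) := by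
      have h0 : (0:ℤ) ≤ ⌊b⌋ + 1 - ⌈a⌉ := by omega
      have h3 := Int.toNat_of_nonneg h0
      exact_mod_cast congrArg (fun z : ℤ => (z:ℝ)) h3
    rw [this]; linarith
  · have : (⌊b⌋ + 1 - ⌈a⌉).toNat = 0 := by omega
    rw [this]; norm_num; linarith

lemma split_sum (g : ℝ → ℝ) (a c b : ℝ) (hac : a ≤ c) (hcb : c ≤ b) :
    ‖∑ n ∈ Finset.Icc ⌈a⌉ ⌊b⌋, e (g n)‖ ≤
      ‖∑ n ∈ Finset.Icc ⌈a⌉ ⌊c⌋, e (g n)‖ + ‖∑ n ∈ Finset.Icc ⌈c⌉ ⌊b⌋, e (g n)‖ + 1 := by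
  have hfc : ⌊c⌋ ≤ ⌊b⌋ := Int.floor_le_floor hcb
  have hcc : ⌊c⌋ ≤ ⌈c⌉ := Int.floor_le_ceil c
  have hcc1 : ⌈c⌉ ≤ ⌊c⌋ + 1 := Int.ceil_le_floor_add_one c
  have hac' : ⌈a⌉ ≤ ⌈c⌉ := Int.ceil_le_ceil hac
  by_cases h1 : ⌈a⌉ ≤ ⌊c⌋
  · have hunion : Finset.Icc ⌈a⌉ ⌊b⌋ = Finset.Icc ⌈a⌉ ⌊c⌋ ∪ Finset.Ioc ⌊c⌋ ⌊b⌋ := by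
      ext n
      simp only [Finset.mem_Icc, Finset.mem_Ioc, Finset.mem_union]
      omega
    have hdisj : Disjoint (Finset.Icc ⌈a⌉ ⌊c⌋) (Finset.Ioc ⌊c⌋ ⌊b⌋) := by
      rw [Finset.disjoint_left]
      intro n hn hn'
      simp only [Finset.mem_Icc, Finset.mem_Ioc] at hn hn'
      omega
    rw [hunion, Finset.sum_union hdisj]
    have key : ‖∑ n ∈ Finset.Ioc ⌊c⌋ ⌊b⌋, e (g n)‖ ≤ ‖∑ n ∈ Finset.Icc ⌈c⌉ ⌊b⌋, e (g n)‖ + 1 := by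
      by_cases hint : ⌈c⌉ = ⌊c⌋ + 1
      · have : Finset.Ioc ⌊c⌋ ⌊b⌋ = Finset.Icc ⌈c⌉ ⌊b⌋ := by
          ext n; simp only [Finset.mem_Ioc, Finset.mem_Icc]; omega
        rw [this]; linarith
      · have hint' : ⌈c⌉ = ⌊c⌋ := by omega
        by_cases h2 : ⌊c⌋ + 1 ≤ ⌊b⌋
        · have : Finset.Icc ⌈c⌉ ⌊b⌋ = insert ⌈c⌉ (Finset.Ioc ⌊c⌋ ⌊b⌋) := by
            ext n; simp only [Finset.mem_Icc, Finset.mem_Ioc, Finset.mem_insert]; omega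
          rw [this, Finset.sum_insert (by simp only [Finset.mem_Ioc]; omega)]
          have := norm_add_le (e (g ⌈c⌉)) (∑ n ∈ Finset.Ioc ⌊c⌋ ⌊b⌋, e (g n))
          have he := e_norm (g ⌈c⌉)
          have h3 : ‖∑ n ∈ Finset.Ioc ⌊c⌋ ⌊b⌋, e (g n)‖
              ≤ ‖e (g ⌈c⌉) + ∑ n ∈ Finset.Ioc ⌊c⌋ ⌊b⌋, e (g n)‖ + ‖e (g ⌈c⌉)‖ := by
            have := norm_sub_le (e (g ⌈c⌉) + ∑ n ∈ Finset.Ioc ⌊c⌋ ⌊b⌋, e (g n)) (e (g ⌈c⌉))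
            simpa using this
          rw [he] at h3
          linarith
        · have : Finset.Ioc ⌊c⌋ ⌊b⌋ = ∅ := by
            apply Finset.Ioc_eq_empty; omega
          rw [this, Finset.sum_empty, norm_zero]
          positivity
    have := norm_add_le (∑ n ∈ Finset.Icc ⌈a⌉ ⌊c⌋, e (g n)) (∑ n ∈ Finset.Ioc ⌊c⌋ ⌊b⌋, e (g n))
    linarith
  · have heq : Finset.Icc ⌈a⌉ ⌊b⌋ = Finset.Icc ⌈c⌉ ⌊b⌋ := by
      have : ⌈a⌉ = ⌈c⌉ := by omega
      rw [this]
    rw [heq]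
    have : (0:ℝ) ≤ ‖∑ n ∈ Finset.Icc ⌈a⌉ ⌊c⌋, e (g n)‖ := norm_nonneg _
    linarith

lemma slope_lower (h H : ℝ → ℝ) (a b lam : ℝ)
    (hh : ∀ x ∈ Icc a b, HasDerivAt h (H x) x) (hH : ∀ x ∈ Icc a b, lam ≤ H x)
    {x y : ℝ} (hx : x ∈ Icc a b) (hy : y ∈ Icc a b) (hxy : x ≤ y) :
    lam * (y - x) ≤ h y - h x := by
  rcases eq_or_lt_of_le hxy with rfl | hlt
  · simp
  have hsub : Icc x y ⊆ Icc a b := Icc_subset_Icc hx.1 hy.2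
  have hcont : ContinuousOn h (Icc x y) := fun z hz => (hh z (hsub hz)).continuousAt.continuousWithinAt
  have hderiv : ∀ z ∈ Ioo x y, HasDerivAt h (H z) z := fun z hz => hh z (hsub (Ioo_subset_Icc_self hz))
  obtain ⟨ξ, hξ, hval⟩ := exists_hasDerivAt_eq_slope h H hlt hcont hderiv
  have hlam : lam ≤ H ξ := hH ξ (hsub (Ioo_subset_Icc_self hξ))
  rw [hval] at hlam
  rw [le_div_iff₀ (by linarith)] at hlam
  nlinarith

lemma slope_upper (h H : ℝ → ℝ) (a b lam2 : ℝ)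
    (hh : ∀ x ∈ Icc a b, HasDerivAt h (H x) x) (hH : ∀ x ∈ Icc a b, H x ≤ lam2)
    {x y : ℝ} (hx : x ∈ Icc a b) (hy : y ∈ Icc a b) (hxy : x ≤ y) :
    h y - h x ≤ lam2 * (y - x) := by
  rcases eq_or_lt_of_le hxy with rfl | hlt
  · simp
  have hsub : Icc x y ⊆ Icc a b := Icc_subset_Icc hx.1 hy.2
  have hcont : ContinuousOn h (Icc x y) := fun z hz => (hh z (hsub hz)).continuousAt.continuousWithinAt
  have hderiv : ∀ z ∈ Ioo x y, HasDerivAt h (H z) z := fun z hz => hh z (hsub (Ioo_subset_Icc_self hz))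
  obtain ⟨ξ, hξ, hval⟩ := exists_hasDerivAt_eq_slope h H hlt hcont hderiv
  have hlam : H ξ ≤ lam2 := hH ξ (hsub (Ioo_subset_Icc_self hξ))
  rw [hval, div_le_iff₀ (by linarith)] at hlam
  nlinarith

lemma cross (h : ℝ → ℝ) (a b v : ℝ) (hab : a ≤ b) (hcont : ContinuousOn h (Icc a b))
    (hmono : MonotoneOn h (Icc a b)) :
    ∃ c ∈ Icc a b, (c = a ∨ ∀ x ∈ Icc a c, h x ≤ v) ∧ (c = b ∨ ∀ x ∈ Icc c b, v ≤ h x) := by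
  rcases lt_or_ge v (h a) with hva | hav
  · refine ⟨a, ⟨le_refl a, hab⟩, Or.inl rfl, Or.inr ?_⟩
    intro x hx
    have := hmono ⟨le_refl a, hab⟩ ⟨hx.1, hx.2⟩ hx.1
    linarith
  rcases lt_or_ge (h b) v with hbv | hvb
  · refine ⟨b, ⟨hab, le_refl b⟩, Or.inr ?_, Or.inl rfl⟩
    intro x hx
    have := hmono ⟨hx.1, hx.2⟩ ⟨hab, le_refl b⟩ hx.2
    linarith
  · obtain ⟨c, hc, hcv⟩ := intermediate_value_Icc hab hcont ⟨hav, hvb⟩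
    refine ⟨c, hc, Or.inr ?_, Or.inr ?_⟩
    · intro x hx
      have := hmono ⟨hx.1, le_trans hx.2 hc.2⟩ hc hx.2
      linarith
    · intro x hx
      have := hmono hc ⟨le_trans hc.1 hx.1, hx.2⟩ hx.1
      linarith

-- single point bound
lemma single_bound (g : ℝ → ℝ) (a : ℝ) : ‖∑ n ∈ Finset.Icc ⌈a⌉ ⌊a⌋, e (g n)‖ ≤ 1 := by
  have h := trivial_bound g ⌈a⌉ ⌊a⌋
  have h2 : ((Finset.Icc ⌈a⌉ ⌊a⌋).card : ℝ) ≤ 1 := by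
    have := Int.floor_le_ceil a
    rw [Int.card_Icc]
    have : (⌊a⌋ + 1 - ⌈a⌉).toNat ≤ 1 := by omega
    exact_mod_cast this
  linarith

lemma KLZ (g h : ℝ → ℝ) (a b δ : ℝ) (m : ℤ) (hδ : 0 < δ) (hδ2 : δ ≤ 1/2)
    (hg : ∀ x ∈ Icc a b, HasDerivAt g (h x) x)
    (hmono : MonotoneOn h (Icc a b))
    (hrange : ∀ x ∈ Icc a b, δ ≤ h x - m ∧ h x - m ≤ 1 - δ) :
    ‖∑ n ∈ Finset.Icc ⌈a⌉ ⌊b⌋, e (g n)‖ ≤ 3 / δ := by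
  have hsum : ∀ n : ℤ, e (g n) = e (g n - (m:ℝ) * n) := by
    intro n
    have : g n - (m:ℝ) * n = g n + ((-(m * n) : ℤ) : ℝ) := by push_cast; ring
    rw [this, e_add, e_int, mul_one]
  rw [Finset.sum_congr rfl (fun n _ => hsum n)]
  apply KL (fun x => g x - (m:ℝ) * x) (fun x => h x - m) a b δ hδ hδ2
  · intro x hx
    have h1 := hg x hx
    have h2 : HasDerivAt (fun y : ℝ => (m:ℝ) * y) ((m:ℝ)) x := by
      simpa using (hasDerivAt_id x).const_mul (m:ℝ)
    exact h1.sub h2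
  · intro x hx y hy hxy
    have := hmono hx hy hxy
    simp only
    linarith
  · intro x hx
    exact hrange x hx

lemma block (g h H : ℝ → ℝ) (a b lam δ : ℝ) (k : ℤ) (hab : a ≤ b) (hlam : 0 < lam)
    (hδ : 0 < δ) (hδ2 : δ ≤ 1/2)
    (hg : ∀ x ∈ Icc a b, HasDerivAt g (h x) x)
    (hh : ∀ x ∈ Icc a b, HasDerivAt h (H x) x)
    (hH : ∀ x ∈ Icc a b, lam ≤ H x)
    (hblk : ∀ x ∈ Icc a b, (k:ℝ) - 1/2 ≤ h x ∧ h x ≤ (k:ℝ) + 1/2) :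
    ‖∑ n ∈ Finset.Icc ⌈a⌉ ⌊b⌋, e (g n)‖ ≤ 6/δ + 2*δ/lam + 3 := by
  have h36 : (1:ℝ) ≤ 3/δ := by
    rw [le_div_iff₀ hδ]; linarith
  have hcont : ContinuousOn h (Icc a b) := fun x hx => (hh x hx).continuousAt.continuousWithinAt
  have hmono : MonotoneOn h (Icc a b) := by
    intro x hx y hy hxy
    have := slope_lower h H a b lam hh hH hx hy hxy
    nlinarith
  obtain ⟨c1, hc1m, hc1l, hc1r⟩ := cross h a b ((k:ℝ) - δ) hab hcont hmono
  have hsub1 : Icc c1 b ⊆ Icc a b := Icc_subset_Icc hc1m.1 (le_refl b)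
  obtain ⟨c2, hc2m, hc2l, hc2r⟩ := cross h c1 b ((k:ℝ) + δ) hc1m.2
    (hcont.mono hsub1) (hmono.mono hsub1)
  have hc2ab : c2 ∈ Icc a b := hsub1 hc2m
  -- piece bounds
  have hP1 : ‖∑ n ∈ Finset.Icc ⌈a⌉ ⌊c1⌋, e (g n)‖ ≤ 3/δ := by
    rcases hc1l with rfl | hfor
    · exact le_trans (single_bound g c1) h36
    · apply KLZ g h a c1 δ (k-1) hδ hδ2
      · intro x hx; exact hg x (Icc_subset_Icc (le_refl a) hc1m.2 hx)
      · exact hmono.mono (Icc_subset_Icc (le_refl a) hc1m.2)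
      · intro x hx
        have h1 := (hblk x (Icc_subset_Icc (le_refl a) hc1m.2 hx)).1
        have h2 := hfor x hx
        push_cast
        constructor <;> linarith
  have hP3 : ‖∑ n ∈ Finset.Icc ⌈c2⌉ ⌊b⌋, e (g n)‖ ≤ 3/δ := by
    rcases hc2r with rfl | hfor
    · exact le_trans (single_bound g c2) h36
    · apply KLZ g h c2 b δ k hδ hδ2
      · intro x hx; exact hg x (Icc_subset_Icc hc2ab.1 (le_refl b) hx)
      · exact hmono.mono (Icc_subset_Icc hc2ab.1 (le_refl b))
      · intro x hx
        have h1 := (hblk x (Icc_subset_Icc hc2ab.1 (le_refl b) hx)).2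
        have h2 := hfor x hx
        constructor <;> linarith
  have hdiff : h c2 - h c1 ≤ 2*δ := by
    rcases hc2l with heq | hfor2
    · rw [heq]; simp; linarith
    · have h2 : h c2 ≤ (k:ℝ) + δ := hfor2 c2 ⟨hc2m.1, le_refl c2⟩
      rcases hc1r with rfl | hfor1
      · have : c2 = c1 := le_antisymm hc2m.2 hc2m.1
        rw [this]; simp; linarith
      · have h1 : (k:ℝ) - δ ≤ h c1 := hfor1 c1 ⟨le_refl c1, hc1m.2⟩
        linarith
  have hP2 : ‖∑ n ∈ Finset.Icc ⌈c1⌉ ⌊c2⌋, e (g n)‖ ≤ 2*δ/lam + 1 := by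
    have hcard := card_le c1 c2 hc2m.1
    have htb := trivial_bound g ⌈c1⌉ ⌊c2⌋
    have hlow := slope_lower h H a b lam hh hH (hsub1 ⟨le_refl c1, hc1m.2⟩) hc2ab hc2m.1
    have hba : c2 - c1 ≤ 2*δ/lam := by
      rw [le_div_iff₀ hlam]; nlinarith
    linarith
  have hs1 := split_sum g a c1 b hc1m.1 hc1m.2
  have hs2 := split_sum g c1 c2 b hc2m.1 hc2m.2
  have h66 : 6/δ = 3/δ + 3/δ := by ring
  linarith

lemma mono_of_deriv_pos (h H : ℝ → ℝ) (a b lam : ℝ) (hlam : 0 < lam)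
    (hh : ∀ x ∈ Icc a b, HasDerivAt h (H x) x) (hH : ∀ x ∈ Icc a b, lam ≤ H x) :
    MonotoneOn h (Icc a b) := by
  intro x hx y hy hxy
  have := slope_lower h H a b lam hh hH hx hy hxy
  nlinarith

lemma rec_bound (t : ℕ) : ∀ (g h H : ℝ → ℝ) (a b lam δ : ℝ),
    a ≤ b → 0 < lam → 0 < δ → δ ≤ 1/2 →
    (∀ x ∈ Icc a b, HasDerivAt g (h x) x) →
    (∀ x ∈ Icc a b, HasDerivAt h (H x) x) →
    (∀ x ∈ Icc a b, lam ≤ H x) →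
    h b ≤ (⌊h a + 1/2⌋ : ℝ) + 1/2 + t →
    ‖∑ n ∈ Finset.Icc ⌈a⌉ ⌊b⌋, e (g n)‖ ≤ (t+1) * (6/δ + 2*δ/lam + 5) := by
  induction t with
  | zero =>
    intro g h H a b lam δ hab hlam hδ hδ2 hg hh hH hbd
    have hblk : ∀ x ∈ Icc a b, ((⌊h a + 1/2⌋:ℝ)) - 1/2 ≤ h x ∧ h x ≤ ((⌊h a + 1/2⌋:ℝ)) + 1/2 := by
      intro x hx
      have hmono1 : h a ≤ h x := mono_of_deriv_pos h H a b lam hlam hh hH ⟨le_refl a, hab⟩ hx hx.1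
      have hmono2 : h x ≤ h b := mono_of_deriv_pos h H a b lam hlam hh hH hx ⟨hab, le_refl b⟩ hx.2
      have hfl : (⌊h a + 1/2⌋ : ℝ) ≤ h a + 1/2 := Int.floor_le _
      constructor
      · linarith
      · push_cast at hbd ⊢; linarith
    have := block g h H a b lam δ ⌊h a + 1/2⌋ hab hlam hδ hδ2 hg hh hH hblk
    have h5 : (0:ℝ) ≤ 2 := by norm_num
    push_cast
    nlinarith
  | succ t ih =>
    intro g h H a b lam δ hab hlam hδ hδ2 hg hh hH hbd
    set k : ℤ := ⌊h a + 1/2⌋ with hk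
    have hfl : (k:ℝ) ≤ h a + 1/2 := Int.floor_le _
    have hfl2 : h a + 1/2 - 1 < k := Int.sub_one_lt_floor _
    have hU : (0:ℝ) < 6/δ + 2*δ/lam + 5 := by positivity
    by_cases hbk : h b ≤ (k:ℝ) + 1/2
    · have hblk : ∀ x ∈ Icc a b, (k:ℝ) - 1/2 ≤ h x ∧ h x ≤ (k:ℝ) + 1/2 := by
        intro x hx
        have hmono1 : h a ≤ h x := mono_of_deriv_pos h H a b lam hlam hh hH ⟨le_refl a, hab⟩ hx hx.1
        have hmono2 : h x ≤ h b := mono_of_deriv_pos h H a b lam hlam hh hH hx ⟨hab, le_refl b⟩ hx.2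
        constructor <;> linarith
      have := block g h H a b lam δ k hab hlam hδ hδ2 hg hh hH hblk
      have ht1 : (1:ℝ) ≤ ((t:ℝ)+1+1) := by have : (0:ℝ) ≤ (t:ℝ) := Nat.cast_nonneg t; linarith
      calc ‖∑ n ∈ Finset.Icc ⌈a⌉ ⌊b⌋, e (g n)‖ ≤ 6/δ + 2*δ/lam + 3 := this
      _ ≤ 1 * (6/δ + 2*δ/lam + 5) := by linarith
      _ ≤ ((t:ℝ)+1+1) * (6/δ + 2*δ/lam + 5) := by nlinarith
      _ = (((t+1:ℕ):ℝ)+1) * (6/δ + 2*δ/lam + 5) := by push_cast; ring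
    · push_neg at hbk
      have hcont : ContinuousOn h (Icc a b) := fun x hx => (hh x hx).continuousAt.continuousWithinAt
      have hiv : ((k:ℝ) + 1/2) ∈ Icc (h a) (h b) := ⟨by linarith, le_of_lt hbk⟩
      obtain ⟨c, hcm, hcv⟩ := intermediate_value_Icc hab hcont hiv
      have hsubl : Icc a c ⊆ Icc a b := Icc_subset_Icc (le_refl a) hcm.2
      have hsubr : Icc c b ⊆ Icc a b := Icc_subset_Icc hcm.1 (le_refl b)
      -- left piece: block
      have hblkl : ∀ x ∈ Icc a c, (k:ℝ) - 1/2 ≤ h x ∧ h x ≤ (k:ℝ) + 1/2 := by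
        intro x hx
        have hx' := hsubl hx
        have hmono1 : h a ≤ h x := mono_of_deriv_pos h H a b lam hlam hh hH ⟨le_refl a, hab⟩ hx' hx.1
        have hmono2 : h x ≤ h c := mono_of_deriv_pos h H a b lam hlam hh hH hx' (hsubl ⟨hcm.1, le_refl c⟩) hx.2
        rw [hcv] at hmono2
        constructor <;> linarith
      have hbl := block g h H a c lam δ k hcm.1 hlam hδ hδ2
        (fun x hx => hg x (hsubl hx)) (fun x hx => hh x (hsubl hx))
        (fun x hx => hH x (hsubl hx)) hblkl
      -- right piece: induction
      have hflc : ⌊h c + 1/2⌋ = k + 1 := by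
        rw [hcv]
        have : (k:ℝ) + 1/2 + 1/2 = ((k+1 : ℤ) : ℝ) := by push_cast; ring
        rw [this, Int.floor_intCast]
      have hbr := ih g h H c b lam δ hcm.2 hlam hδ hδ2
        (fun x hx => hg x (hsubr hx)) (fun x hx => hh x (hsubr hx))
        (fun x hx => hH x (hsubr hx))
        (by rw [hflc]; push_cast; push_cast at hbd; linarith)
      have hsp := split_sum g a c b hcm.1 hcm.2
      calc ‖∑ n ∈ Finset.Icc ⌈a⌉ ⌊b⌋, e (g n)‖
          ≤ ‖∑ n ∈ Finset.Icc ⌈a⌉ ⌊c⌋, e (g n)‖ + ‖∑ n ∈ Finset.Icc ⌈c⌉ ⌊b⌋, e (g n)‖ + 1 := hsp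
        _ ≤ (6/δ + 2*δ/lam + 3) + ((t:ℝ)+1) * (6/δ + 2*δ/lam + 5) + 1 := by linarith
        _ ≤ (((t+1:ℕ):ℝ)+1) * (6/δ + 2*δ/lam + 5) := by push_cast; nlinarith

lemma main_pos (g h H : ℝ → ℝ) (a b lam : ℝ) (hab : a ≤ b) (hlam : 0 < lam) (hlam4 : lam ≤ 1/4)
    (hg : ∀ x ∈ Icc a b, HasDerivAt g (h x) x)
    (hh : ∀ x ∈ Icc a b, HasDerivAt h (H x) x)
    (hH : ∀ x ∈ Icc a b, lam ≤ H x ∧ H x ≤ 2*lam) :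
    ‖∑ n ∈ Finset.Icc ⌈a⌉ ⌊b⌋, e (g n)‖ ≤ 26 * Real.sqrt lam * (b - a) + 33 / Real.sqrt lam := by
  set δ := Real.sqrt lam with hδdef
  have hδ : 0 < δ := Real.sqrt_pos.mpr hlam
  have hδsq : δ * δ = lam := Real.mul_self_sqrt (le_of_lt hlam)
  have hδ2 : δ ≤ 1/2 := by
    have h1 : Real.sqrt lam ≤ Real.sqrt (1/4) := Real.sqrt_le_sqrt hlam4
    have h2 : Real.sqrt (1/4 : ℝ) = 1/2 := by
      rw [show (1/4:ℝ) = (1/2)^2 by norm_num, Real.sqrt_sq (by norm_num)]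
    rw [h2] at h1; exact h1
  have hH1 : ∀ x ∈ Icc a b, lam ≤ H x := fun x hx => (hH x hx).1
  have hH2 : ∀ x ∈ Icc a b, H x ≤ 2*lam := fun x hx => (hH x hx).2
  have hba0 : 0 ≤ b - a := by linarith
  have hmono : h a ≤ h b := by
    have := slope_lower h H a b lam hh hH1 ⟨le_refl a, hab⟩ ⟨hab, le_refl b⟩ hab
    nlinarith
  have hup : h b - h a ≤ 2*lam*(b-a) :=
    slope_upper h H a b (2*lam) hh hH2 ⟨le_refl a, hab⟩ ⟨hab, le_refl b⟩ hab
  set t : ℕ := ⌈h b - h a + 1/2⌉.toNat with ht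
  have hceil_nonneg : (0:ℤ) ≤ ⌈h b - h a + 1/2⌉ := by
    apply Int.ceil_nonneg; linarith
  have htval : (t:ℝ) = (⌈h b - h a + 1/2⌉ : ℝ) := by
    rw [ht]
    exact_mod_cast congrArg (fun z : ℤ => (z:ℝ)) (Int.toNat_of_nonneg hceil_nonneg)
  have htlow : h b - h a + 1/2 ≤ (t:ℝ) := by
    rw [htval]; exact Int.le_ceil _
  have htup : (t:ℝ) ≤ h b - h a + 3/2 := by
    rw [htval]
    have := Int.ceil_lt_add_one (h b - h a + 1/2)
    linarith
  have hbd : h b ≤ (⌊h a + 1/2⌋ : ℝ) + 1/2 + t := by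
    have := Int.sub_one_lt_floor (h a + 1/2)
    linarith
  have hrec := rec_bound t g h H a b lam δ hab hlam hδ hδ2 hg hh hH1 hbd
  have hkey : 2*δ/lam = 2/δ := by
    rw [← hδsq]; field_simp
  rw [hkey] at hrec
  have hfac : 6/δ + 2/δ + 5 ≤ 13/δ := by
    have h5 : (5:ℝ) ≤ 5/δ := by
      rw [le_div_iff₀ hδ]; nlinarith
    have h13 : 6/δ + 2/δ + 5/δ = 13/δ := by ring
    linarith
  have ht1pos : (0:ℝ) < (t:ℝ)+1 := by positivity
  have hfacpos : (0:ℝ) ≤ 6/δ + 2/δ + 5 := by positivity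
  have h13pos : (0:ℝ) < 13/δ := by positivity
  have hld : lam/δ = δ := by rw [← hδsq]; field_simp
  calc ‖∑ n ∈ Finset.Icc ⌈a⌉ ⌊b⌋, e (g n)‖ ≤ ((t:ℝ)+1) * (6/δ + 2/δ + 5) := hrec
    _ ≤ ((t:ℝ)+1) * (13/δ) := by nlinarith
    _ ≤ (2*lam*(b-a) + 5/2) * (13/δ) := by nlinarith
    _ = 26*(lam/δ)*(b-a) + (65/2)/δ := by field_simp; ring
    _ ≤ 26 * δ * (b - a) + 33/δ := by
        rw [hld]
        have h65 : (65/2 : ℝ)/δ ≤ 33/δ := by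
          rw [div_le_div_iff₀ hδ hδ]; nlinarith
        linarith
    _ = 26 * Real.sqrt lam * (b - a) + 33 / Real.sqrt lam := by rw [hδdef]

set_option maxHeartbeats 1000000 in
theorem stmt_12 :
    ∃ C : ℝ, 0 < C ∧
      ∀ (a b : ℝ) (f f' f'' : ℝ → ℝ) (Lam : ℝ) (N h K : ℕ),
        (∀ x ∈ Set.Icc a b, HasDerivAt f (f' x) x) →
        (∀ x ∈ Set.Icc a b, HasDerivAt f' (f'' x) x) →
        ContinuousOn f'' (Set.Icc a b) →
        0 < Lam →
        (∀ x ∈ Set.Icc a b, Lam ≤ |f'' x| ∧ |f'' x| ≤ 2 * Lam) →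
        (Finset.Icc ⌈a⌉ ⌊b⌋).card = N →
        1 ≤ h → 1 ≤ K →
        ‖∑ n ∈ Finset.Icc ⌈a⌉ ⌊b⌋, e (h * f n / K)‖ ≤
          C * ((N : ℝ) * Real.sqrt Lam * Real.sqrt ((h : ℝ) / K) +
            (1 / Real.sqrt Lam) * Real.sqrt ((K : ℝ) / h)) := by
  refine ⟨52, by norm_num, ?_⟩
  intro a b f f' f'' Lam N h K hf hf' hf''c hLam hbound hcard hh1 hK1
  have hKpos : (0:ℝ) < K := by exact_mod_cast Nat.lt_of_lt_of_le Nat.zero_lt_one hK1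
  have hhpos : (0:ℝ) < h := by exact_mod_cast Nat.lt_of_lt_of_le Nat.zero_lt_one hh1
  set lam : ℝ := (h:ℝ) * Lam / K with hlamdef
  have hlam : 0 < lam := by positivity
  have hX : Real.sqrt lam = Real.sqrt Lam * Real.sqrt ((h:ℝ)/K) := by
    rw [hlamdef, show (h:ℝ) * Lam / K = Lam * ((h:ℝ)/K) by ring, Real.sqrt_mul hLam.le]
  have hY : 1/Real.sqrt lam = (1/Real.sqrt Lam) * Real.sqrt ((K:ℝ)/h) := by
    have h1 : ((K:ℝ)/h) = ((h:ℝ)/K)⁻¹ := by rw [inv_div]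
    rw [h1, Real.sqrt_inv, hX]
    rw [one_div, one_div, mul_inv]
  have hsqLam : 0 ≤ Real.sqrt lam := Real.sqrt_nonneg _
  have hXnn : (0:ℝ) ≤ (N:ℝ) * Real.sqrt Lam * Real.sqrt ((h:ℝ)/K) := by positivity
  have hYnn : (0:ℝ) ≤ (1/Real.sqrt Lam) * Real.sqrt ((K:ℝ)/h) := by positivity
  by_cases hab : ⌈a⌉ ≤ ⌊b⌋
  swap
  · rw [Finset.Icc_eq_empty (by exact_mod_cast hab), Finset.sum_empty, norm_zero]
    positivity
  have haab : a ≤ b := by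
    have h1 : (a:ℝ) ≤ ⌈a⌉ := Int.le_ceil a
    have h2 : ((⌊b⌋:ℤ):ℝ) ≤ b := Int.floor_le b
    have h3 : ((⌈a⌉:ℤ):ℝ) ≤ ((⌊b⌋:ℤ):ℝ) := by exact_mod_cast hab
    linarith
  have hNval : (N:ℝ) = ((⌊b⌋:ℝ) - ⌈a⌉ + 1) := by
    rw [← hcard, Int.card_Icc]
    have h0 : (0:ℤ) ≤ ⌊b⌋ + 1 - ⌈a⌉ := by omega
    have h2 : ((⌊b⌋ + 1 - ⌈a⌉).toNat : ℝ) = (((⌊b⌋ + 1 - ⌈a⌉ : ℤ)) : ℝ) := by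
      exact_mod_cast congrArg (fun z : ℤ => (z:ℝ)) (Int.toNat_of_nonneg h0)
    rw [h2]
    push_cast
    ring
  have hN1 : (1:ℝ) ≤ (N:ℝ) := by
    have h3 : ((⌈a⌉:ℤ):ℝ) ≤ ((⌊b⌋:ℤ):ℝ) := by exact_mod_cast hab
    rw [hNval]; linarith
  have hba2N : b - a ≤ 2 * (N:ℝ) := by
    have h1 : (a:ℝ) ≥ ⌈a⌉ - 1 := by
      have := Int.ceil_lt_add_one a; linarith
    have h2 : b ≤ (⌊b⌋:ℝ) + 1 := by
      have := Int.lt_floor_add_one b; linarith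
    rw [hNval] at hN1 ⊢
    linarith
  -- rewrite the summand
  have hsummand : ∀ n : ℤ, e ((h:ℝ) * f n / K) = e (((h:ℝ)/K) * f n) := by
    intro n; congr 1; ring
  rw [Finset.sum_congr rfl (fun n _ => hsummand n)]
  set c0 : ℝ := (h:ℝ)/K with hc0
  have hc0pos : 0 < c0 := by positivity
  have hlamc0 : lam = c0 * Lam := by rw [hlamdef, hc0]; ring
  by_cases hlam4 : lam ≤ 1/4
  swap
  · -- trivial bound
    push_neg at hlam4
    have htriv := trivial_bound (fun x => c0 * f x) ⌈a⌉ ⌊b⌋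
    rw [hcard] at htriv
    have hsq : (1/2:ℝ) ≤ Real.sqrt lam := by
      have h1 : Real.sqrt (1/4) ≤ Real.sqrt lam := Real.sqrt_le_sqrt (le_of_lt hlam4)
      have h2 : Real.sqrt (1/4 : ℝ) = 1/2 := by
        rw [show (1/4:ℝ) = (1/2)^2 by norm_num, Real.sqrt_sq (by norm_num)]
      linarith
    calc ‖∑ n ∈ Finset.Icc ⌈a⌉ ⌊b⌋, e (c0 * f n)‖ ≤ (N:ℝ) := htriv
      _ ≤ 2 * ((N:ℝ) * Real.sqrt lam) := by nlinarith
      _ = 2 * ((N:ℝ) * Real.sqrt Lam * Real.sqrt ((h:ℝ)/K)) := by rw [hX]; ring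
      _ ≤ 52 * ((N : ℝ) * Real.sqrt Lam * Real.sqrt ((h : ℝ) / K) +
            (1 / Real.sqrt Lam) * Real.sqrt ((K : ℝ) / h)) := by linarith [hXnn, hYnn]
  -- main case
  have hsign : (∀ x ∈ Icc a b, 0 < f'' x) ∨ (∀ x ∈ Icc a b, f'' x < 0) := by
    have hzero : ∀ x ∈ Icc a b, f'' x ≠ 0 := by
      intro x hx h0
      have := (hbound x hx).1
      rw [h0] at this; simp at this; linarith
    rcases lt_trichotomy (f'' a) 0 with hneg | hz | hpos
    · right
      intro x hx
      by_contra h0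
      push_neg at h0
      have hsub : Set.uIcc a x ⊆ Icc a b := (Set.ordConnected_Icc).uIcc_subset
        ⟨le_refl a, haab⟩ hx
      have hmem : (0:ℝ) ∈ Set.uIcc (f'' a) (f'' x) := by
        rw [Set.mem_uIcc]; left; exact ⟨le_of_lt hneg, h0⟩
      obtain ⟨c, hc, hc0'⟩ := intermediate_value_uIcc (hf''c.mono hsub) hmem
      exact hzero c (hsub hc) hc0'
    · exact absurd hz (hzero a ⟨le_refl a, haab⟩)
    · left
      intro x hx
      by_contra h0
      push_neg at h0
      have hsub : Set.uIcc a x ⊆ Icc a b := (Set.ordConnected_Icc).uIcc_subset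
        ⟨le_refl a, haab⟩ hx
      have hmem : (0:ℝ) ∈ Set.uIcc (f'' a) (f'' x) := by
        rw [Set.mem_uIcc]; right; exact ⟨h0, le_of_lt hpos⟩
      obtain ⟨c, hc, hc0'⟩ := intermediate_value_uIcc (hf''c.mono hsub) hmem
      exact hzero c (hsub hc) hc0'
  have hmain : ‖∑ n ∈ Finset.Icc ⌈a⌉ ⌊b⌋, e (c0 * f n)‖ ≤
      26 * Real.sqrt lam * (b - a) + 33 / Real.sqrt lam := by
    rcases hsign with hpos | hneg
    · apply main_pos (fun x => c0 * f x) (fun x => c0 * f' x) (fun x => c0 * f'' x)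
        a b lam haab hlam hlam4
      · intro x hx; exact (hf x hx).const_mul c0
      · intro x hx; exact (hf' x hx).const_mul c0
      · intro x hx
        have h1 := (hbound x hx).1
        have h2 := (hbound x hx).2
        have h3 := hpos x hx
        rw [abs_of_pos h3] at h1 h2
        constructor
        · rw [hlamc0]; nlinarith
        · have : 2 * lam = c0 * (2 * Lam) := by rw [hlamc0]; ring
          rw [this]; nlinarith
    · have hconj : ∑ n ∈ Finset.Icc ⌈a⌉ ⌊b⌋, e (-(c0 * f n)) =
          (starRingEnd ℂ) (∑ n ∈ Finset.Icc ⌈a⌉ ⌊b⌋, e (c0 * f n)) := by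
        rw [map_sum]
        exact Finset.sum_congr rfl (fun n _ => (e_conj (c0 * f n)).symm)
      have hnorm : ‖∑ n ∈ Finset.Icc ⌈a⌉ ⌊b⌋, e (c0 * f n)‖ =
          ‖∑ n ∈ Finset.Icc ⌈a⌉ ⌊b⌋, e (-(c0 * f n))‖ := by
        rw [hconj, RCLike.norm_conj]
      rw [hnorm]
      apply main_pos (fun x => -(c0 * f x)) (fun x => -(c0 * f' x)) (fun x => -(c0 * f'' x))
        a b lam haab hlam hlam4
      · intro x hx; exact ((hf x hx).const_mul c0).neg
      · intro x hx; exact ((hf' x hx).const_mul c0).neg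
      · intro x hx
        have h1 := (hbound x hx).1
        have h2 := (hbound x hx).2
        have h3 := hneg x hx
        rw [abs_of_neg h3] at h1 h2
        constructor
        · rw [hlamc0]; nlinarith
        · have : 2 * lam = c0 * (2 * Lam) := by rw [hlamc0]; ring
          rw [this]; nlinarith
  calc ‖∑ n ∈ Finset.Icc ⌈a⌉ ⌊b⌋, e (c0 * f n)‖
      ≤ 26 * Real.sqrt lam * (b - a) + 33 / Real.sqrt lam := hmain
    _ ≤ 52 * ((N:ℝ) * Real.sqrt lam) + 33 * (1 / Real.sqrt lam) := by
        have hsqpos : 0 < Real.sqrt lam := Real.sqrt_pos.mpr hlam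
        have h1 : 26 * Real.sqrt lam * (b - a) ≤ 52 * ((N:ℝ) * Real.sqrt lam) := by
          calc 26 * Real.sqrt lam * (b - a) ≤ 26 * Real.sqrt lam * (2 * (N:ℝ)) :=
                mul_le_mul_of_nonneg_left hba2N (by positivity)
            _ = 52 * ((N:ℝ) * Real.sqrt lam) := by ring
        have h2 : 33 / Real.sqrt lam = 33 * (1 / Real.sqrt lam) := by ring
        linarith
    _ = 52 * ((N:ℝ) * Real.sqrt Lam * Real.sqrt ((h:ℝ)/K)) +
          33 * ((1/Real.sqrt Lam) * Real.sqrt ((K:ℝ)/h)) := by rw [hY, hX]; ring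
    _ ≤ 52 * ((N : ℝ) * Real.sqrt Lam * Real.sqrt ((h : ℝ) / K) +
          (1 / Real.sqrt Lam) * Real.sqrt ((K : ℝ) / h)) := by linarith [hXnn, hYnn]
end

section
/- Let k ∈ ℤ, L, M ≥ 1 integers, and m an integer with 0 ≤ m < M such that for all 0 ≤ ℓ < L the interval [m/M + ℓ·k/(LM), (m+1)/M + ℓ·(k+1)/(LM)) contains no integer. Suppose n is an integer with k/(LM) ≤ f'(n), f'(n+L−1) < (k+1)/(LM) and m/M ≤ {f(n)} < (m+1)/M, where f is increasing and differentiable on [n, n+L−1] with f' monotone. Then for 0 ≤ ℓ < L, ⌊f(n+ℓ)⌋ = ⌊f(n)⌋ + ℓ·⌊k/(LM)⌋ + i_ℓ where the integers i_ℓ satisfy i_0 = 0 and i_{ℓ+1} − i_ℓ ∈ {0,1}. -/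
/-!
By the mean value theorem and the monotonicity of `f'`, `f (n + ℓ) - ⌊f n⌋` lies in the window
`[m/M + ℓk/(LM), (m+1)/M + ℓ(k+1)/(LM))`, which contains no integer, so its floor is that of the
left endpoint. With `d = k/(LM)`, the corrections `i ℓ = ⌊m/M + ℓd⌋ - ℓ⌊d⌋` then increase by
`⌊x + d⌋ - ⌊x⌋ - ⌊d⌋ ∈ {0, 1}`.
-/

open Set

namespace Int

variable {R : Type*} [Ring R] [LinearOrder R] [IsStrictOrderedRing R] [FloorRing R]

theorem floor_eq_floor_of_forall_intCast_notMem_Ico {a b x : R} (hax : a ≤ x) (hxb : x < b)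
    (hgap : ∀ j : ℤ, (j : R) ∉ Ico a b) : ⌊x⌋ = ⌊a⌋ := by
  refine le_antisymm ?_ (floor_mono hax)
  by_contra! hlt
  refine hgap ⌊x⌋ ⟨?_, (floor_le x).trans_lt hxb⟩
  exact (lt_floor_add_one a).le.trans (by exact_mod_cast hlt)

theorem floor_add_sub_floor_sub_floor_eq_zero_or_one (x d : R) :
    ⌊x + d⌋ - ⌊x⌋ - ⌊d⌋ = 0 ∨ ⌊x + d⌋ - ⌊x⌋ - ⌊d⌋ = 1 := by
  have := le_floor_add x d
  have := le_floor_add_floor x d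
  omega

theorem floor_eq_floor_add_floor_of_fract_mem_Ico {u v p q r s : R}
    (hp : p ≤ fract u) (hq : fract u < q) (hr : r ≤ v - u) (hs : v - u ≤ s)
    (hgap : ∀ j : ℤ, (j : R) ∉ Ico (p + r) (q + s)) : ⌊v⌋ = ⌊u⌋ + ⌊p + r⌋ := by
  have hv : v - ⌊u⌋ = fract u + (v - u) := by rw [fract]; abel
  have := floor_eq_floor_of_forall_intCast_notMem_Ico (x := v - ⌊u⌋)
    (by rw [hv]; exact add_le_add hp hr) (by rw [hv]; exact add_lt_add_of_lt_of_le hq hs) hgap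
  rw [floor_sub_intCast] at this
  omega

end Int

theorem mul_sub_le_sub_le_mul_sub_of_monotoneOn_deriv {f f' : ℝ → ℝ} {a b y : ℝ}
    (hderiv : ∀ x ∈ Icc a b, HasDerivAt f (f' x) x) (hmono : MonotoneOn f' (Icc a b))
    (hay : a ≤ y) (hyb : y ≤ b) :
    f' a * (y - a) ≤ f y - f a ∧ f y - f a ≤ f' b * (y - a) := by
  rcases hay.eq_or_lt with rfl | hay
  · simp
  have hsub : Icc a y ⊆ Icc a b := Icc_subset_Icc_right hyb
  obtain ⟨c, hc, hslope⟩ := exists_hasDerivAt_eq_slope f f' hay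
    (fun x hx => (hderiv x (hsub hx)).continuousAt.continuousWithinAt)
    (fun x hx => hderiv x (hsub (Ioo_subset_Icc_self hx)))
  have hcab : c ∈ Icc a b := hsub (Ioo_subset_Icc_self hc)
  have hdiff : f y - f a = f' c * (y - a) := by
    rw [hslope, div_mul_cancel₀ _ (sub_pos.2 hay).ne']
  rw [hdiff]
  exact ⟨mul_le_mul_of_nonneg_right (hmono (left_mem_Icc.2 (hay.le.trans hyb)) hcab hc.1.le)
      (sub_nonneg.2 hay.le),
    mul_le_mul_of_nonneg_right (hmono hcab (right_mem_Icc.2 (hay.le.trans hyb)) hcab.2)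
      (sub_nonneg.2 hay.le)⟩

theorem stmt_16_general (f f' : ℝ → ℝ) (n k : ℤ) (L M : ℕ) (m : ℕ)
    (hm : m < M)
    (hgood : ∀ ℓ : ℕ, ℓ < L → ∀ j : ℤ,
      ¬((m : ℝ) / M + ℓ * k / (L * M) ≤ j ∧
        (j : ℝ) < (m + 1 : ℝ) / M + ℓ * (k + 1 : ℝ) / (L * M)))
    (hderiv : ∀ x ∈ Set.Icc (n : ℝ) ((n : ℝ) + L - 1), HasDerivAt f (f' x) x)
    (hmono' : MonotoneOn f' (Set.Icc (n : ℝ) ((n : ℝ) + L - 1)))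
    (hk1 : (k : ℝ) / (L * M) ≤ f' n)
    (hk2 : f' ((n : ℝ) + L - 1) < (k + 1 : ℝ) / (L * M))
    (hfrac1 : (m : ℝ) / M ≤ Int.fract (f n))
    (hfrac2 : Int.fract (f n) < (m + 1 : ℝ) / M) :
    ∃ i : ℕ → ℤ, i 0 = 0 ∧ (∀ ℓ : ℕ, ℓ + 1 < L → i (ℓ + 1) - i ℓ = 0 ∨ i (ℓ + 1) - i ℓ = 1) ∧
      ∀ ℓ : ℕ, ℓ < L →
        ⌊f ((n : ℝ) + ℓ)⌋ = ⌊f n⌋ + ℓ * ⌊(k : ℝ) / (L * M)⌋ + i ℓ := by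
  set d : ℝ := (k : ℝ) / (L * M)
  have hshift (ℓ : ℕ) : (m : ℝ) / M + ℓ * k / (L * M) = m / M + ℓ * d := by
    simp only [d, mul_div_assoc]
  refine ⟨fun ℓ => ⌊(m : ℝ) / M + ℓ * k / (L * M)⌋ - ℓ * ⌊d⌋, ?_, fun ℓ _ => ?_, fun ℓ hℓ => ?_⟩
  · have hMpos : (0 : ℝ) < M := by exact_mod_cast (Nat.zero_le m).trans_lt hm
    simpa [Int.floor_eq_zero_iff, div_lt_one hMpos, div_nonneg] using hm
  · have hsucc : (m : ℝ) / M + (ℓ + 1 : ℕ) * k / (L * M) = m / M + ℓ * d + d := by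
      rw [hshift]; push_cast; ring
    simp only [hsucc, hshift]
    rcases Int.floor_add_sub_floor_sub_floor_eq_zero_or_one ((m : ℝ) / M + ℓ * d) d with h | h
    · left; push_cast; linear_combination h
    · right; push_cast; linear_combination h
  · have hℓL : (n : ℝ) + ℓ ≤ n + L - 1 := by
      have : (ℓ + 1 : ℝ) ≤ L := by exact_mod_cast hℓ
      linarith
    obtain ⟨hlow, hupp⟩ := mul_sub_le_sub_le_mul_sub_of_monotoneOn_deriv hderiv hmono'
      (le_add_of_nonneg_right ℓ.cast_nonneg) hℓL
    rw [add_sub_cancel_left] at hlow hupp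
    have hr : (ℓ : ℝ) * k / (L * M) ≤ f (n + ℓ) - f n := by
      rw [mul_div_assoc, mul_comm]
      exact (mul_le_mul_of_nonneg_right hk1 ℓ.cast_nonneg).trans hlow
    have hs : f (n + ℓ) - f n ≤ ℓ * (k + 1 : ℝ) / (L * M) := by
      rw [mul_div_assoc, mul_comm]
      exact hupp.trans (mul_le_mul_of_nonneg_right hk2.le ℓ.cast_nonneg)
    rw [Int.floor_eq_floor_add_floor_of_fract_mem_Ico hfrac1 hfrac2 hr hs (hgood ℓ hℓ)]
    ring

theorem stmt_16 (f f' : ℝ → ℝ) (n k : ℤ) (L M : ℕ) (m : ℕ)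
    (hL : 1 ≤ L) (hM : 1 ≤ M) (hm : m < M)
    (hgood : ∀ ℓ : ℕ, ℓ < L → ∀ j : ℤ,
      ¬((m : ℝ) / M + ℓ * k / (L * M) ≤ j ∧
        (j : ℝ) < (m + 1 : ℝ) / M + ℓ * (k + 1 : ℝ) / (L * M)))
    (hderiv : ∀ x ∈ Set.Icc (n : ℝ) ((n : ℝ) + L - 1), HasDerivAt f (f' x) x)
    (hmono : MonotoneOn f (Set.Icc (n : ℝ) ((n : ℝ) + L - 1)))
    (hmono' : MonotoneOn f' (Set.Icc (n : ℝ) ((n : ℝ) + L - 1)))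
    (hk1 : (k : ℝ) / (L * M) ≤ f' n)
    (hk2 : f' ((n : ℝ) + L - 1) < (k + 1 : ℝ) / (L * M))
    (hfrac1 : (m : ℝ) / M ≤ Int.fract (f n))
    (hfrac2 : Int.fract (f n) < (m + 1 : ℝ) / M) :
    ∃ i : ℕ → ℤ, i 0 = 0 ∧ (∀ ℓ : ℕ, ℓ + 1 < L → i (ℓ + 1) - i ℓ = 0 ∨ i (ℓ + 1) - i ℓ = 1) ∧
      ∀ ℓ : ℕ, ℓ < L →
        ⌊f ((n : ℝ) + ℓ)⌋ = ⌊f n⌋ + ℓ * ⌊(k : ℝ) / (L * M)⌋ + i ℓ :=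
  stmt_16_general f f' n k L M m hm hgood hderiv hmono' hk1 hk2 hfrac1 hfrac2
end
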